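/- Let K be an algebraically closed field of characteristic 2. There exist a₁, a₂, a₃ ∈ K with a₃ ≠ 0 such that, setting y₃ := a₁x₁ + a₂x₂ + a₃x₃, the quartic surface X = { z²·(x₁x₂ + x₃²) + (y₃ + x₁)(y₃ + x₂)·y₃·(y₃ + x₁ + x₂) = 0 } ⊂ ℙ³_K has exactly 14 singular points. -/
import Mathlib


open MvPolynomial

noncomputable section

/-- The singular locus of the surface `{F = 0} ⊆ ℙ³_K`: the set of points of `ℙ³_K` at which
`F` and all four partial derivatives of `F` vanish (tested on every representative vector). -/
def singLocus {K : Type*} [Field K] (F : MvPolynomial (Fin 4) K) :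
    Set (Projectivization K (Fin 4 → K)) :=
  {p | ∀ (v : Fin 4 → K) (hv : v ≠ 0), Projectivization.mk K v hv = p →
      (eval v F = 0 ∧ ∀ i, eval v (pderiv i F) = 0)}

namespace Quartic14

set_option maxHeartbeats 3200000

variable {K : Type*} [Field K]

/-- Our quartic polynomial with `a₁ = a₂ = a₃ = ω`. -/
def Fq (ω : K) : MvPolynomial (Fin 4) K :=
  X 3 ^ 2 * (X 0 * X 1 + X 2 ^ 2)
    + (C ω * X 0 + C ω * X 1 + C ω * X 2 + X 0) * (C ω * X 0 + C ω * X 1 + C ω * X 2 + X 1)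
      * (C ω * X 0 + C ω * X 1 + C ω * X 2) * (C ω * X 0 + C ω * X 1 + C ω * X 2 + X 0 + X 1)

lemma pd01 : pderiv (0:Fin 4) (X 1 : MvPolynomial (Fin 4) K) = 0 := pderiv_X_of_ne (by decide)
lemma pd02 : pderiv (0:Fin 4) (X 2 : MvPolynomial (Fin 4) K) = 0 := pderiv_X_of_ne (by decide)
lemma pd03 : pderiv (0:Fin 4) (X 3 : MvPolynomial (Fin 4) K) = 0 := pderiv_X_of_ne (by decide)
lemma pd10 : pderiv (1:Fin 4) (X 0 : MvPolynomial (Fin 4) K) = 0 := pderiv_X_of_ne (by decide)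
lemma pd12 : pderiv (1:Fin 4) (X 2 : MvPolynomial (Fin 4) K) = 0 := pderiv_X_of_ne (by decide)
lemma pd13 : pderiv (1:Fin 4) (X 3 : MvPolynomial (Fin 4) K) = 0 := pderiv_X_of_ne (by decide)
lemma pd20 : pderiv (2:Fin 4) (X 0 : MvPolynomial (Fin 4) K) = 0 := pderiv_X_of_ne (by decide)
lemma pd21 : pderiv (2:Fin 4) (X 1 : MvPolynomial (Fin 4) K) = 0 := pderiv_X_of_ne (by decide)
lemma pd23 : pderiv (2:Fin 4) (X 3 : MvPolynomial (Fin 4) K) = 0 := pderiv_X_of_ne (by decide)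
lemma pd30 : pderiv (3:Fin 4) (X 0 : MvPolynomial (Fin 4) K) = 0 := pderiv_X_of_ne (by decide)
lemma pd31 : pderiv (3:Fin 4) (X 1 : MvPolynomial (Fin 4) K) = 0 := pderiv_X_of_ne (by decide)
lemma pd32 : pderiv (3:Fin 4) (X 2 : MvPolynomial (Fin 4) K) = 0 := pderiv_X_of_ne (by decide)

lemma ev0 (ω : K) (v : Fin 4 → K) :
    eval v (Fq ω) = (v 3)^2*((v 0)*(v 1)+(v 2)^2) + (ω*((v 0)+(v 1)+(v 2))+(v 0))*(ω*((v 0)+(v 1)+(v 2))+(v 1))*(ω*((v 0)+(v 1)+(v 2)))*(ω*((v 0)+(v 1)+(v 2))+(v 0)+(v 1)) := by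
  simp only [Fq, map_add, map_mul, map_pow, eval_X, eval_C]
  ring

lemma ev1 (ω : K) (v : Fin 4 → K) :
    eval v (pderiv 0 (Fq ω)) = (v 3)^2*(v 1) + (ω+1)*((ω*((v 0)+(v 1)+(v 2))+(v 1))*(ω*((v 0)+(v 1)+(v 2)))*(ω*((v 0)+(v 1)+(v 2))+(v 0)+(v 1))) + ω*((ω*((v 0)+(v 1)+(v 2))+(v 0))*(ω*((v 0)+(v 1)+(v 2)))*(ω*((v 0)+(v 1)+(v 2))+(v 0)+(v 1))) + ω*((ω*((v 0)+(v 1)+(v 2))+(v 0))*(ω*((v 0)+(v 1)+(v 2))+(v 1))*(ω*((v 0)+(v 1)+(v 2))+(v 0)+(v 1))) + (ω+1)*((ω*((v 0)+(v 1)+(v 2))+(v 0))*(ω*((v 0)+(v 1)+(v 2))+(v 1))*(ω*((v 0)+(v 1)+(v 2)))) := by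
  simp only [Fq, pderiv_mul, pderiv_pow, map_add, pderiv_X_self, pderiv_C,
    pd01, pd02, pd03, pd10, pd12, pd13, pd20, pd21, pd23, pd30, pd31, pd32,
    eval_X, eval_C, eval_pow, eval_mul, eval_add, map_mul, map_pow, mul_zero, zero_mul,
    mul_one, one_mul, add_zero, zero_add, map_one, map_ofNat, Nat.cast_ofNat, map_zero]
  ring

lemma ev2 (ω : K) (v : Fin 4 → K) :
    eval v (pderiv 1 (Fq ω)) = (v 3)^2*(v 0) + ω*((ω*((v 0)+(v 1)+(v 2))+(v 1))*(ω*((v 0)+(v 1)+(v 2)))*(ω*((v 0)+(v 1)+(v 2))+(v 0)+(v 1))) + (ω+1)*((ω*((v 0)+(v 1)+(v 2))+(v 0))*(ω*((v 0)+(v 1)+(v 2)))*(ω*((v 0)+(v 1)+(v 2))+(v 0)+(v 1))) + ω*((ω*((v 0)+(v 1)+(v 2))+(v 0))*(ω*((v 0)+(v 1)+(v 2))+(v 1))*(ω*((v 0)+(v 1)+(v 2))+(v 0)+(v 1))) + (ω+1)*((ω*((v 0)+(v 1)+(v 2))+(v 0))*(ω*((v 0)+(v 1)+(v 2))+(v 1))*(ω*((v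 0)+(v 1)+(v 2)))) := by
  simp only [Fq, pderiv_mul, pderiv_pow, map_add, pderiv_X_self, pderiv_C,
    pd01, pd02, pd03, pd10, pd12, pd13, pd20, pd21, pd23, pd30, pd31, pd32,
    eval_X, eval_C, eval_pow, eval_mul, eval_add, map_mul, map_pow, mul_zero, zero_mul,
    mul_one, one_mul, add_zero, zero_add, map_one, map_ofNat, Nat.cast_ofNat, map_zero]
  ring

lemma ev3 (ω : K) (v : Fin 4 → K) :
    eval v (pderiv 2 (Fq ω)) = 2*((v 3)^2*(v 2)) + ω*((ω*((v 0)+(v 1)+(v 2))+(v 1))*(ω*((v 0)+(v 1)+(v 2)))*(ω*((v 0)+(v 1)+(v 2))+(v 0)+(v 1))) + ω*((ω*((v 0)+(v 1)+(v 2))+(v 0))*(ω*((v 0)+(v 1)+(v 2)))*(ω*((v 0)+(v 1)+(v 2))+(v 0)+(v 1))) + ω*((ω*((v 0)+(v 1)+(v 2))+(v 0))*(ω*((v 0)+(v 1)+(v 2))+(v 1))*(ω*((v 0)+(v 1)+(v 2))+(v 0)+(v 1))) + ω*((ω*((v 0)+(v 1)+(v 2))+(v 0))*(ω*((v 0)+(v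 1)+(v 2))+(v 1))*(ω*((v 0)+(v 1)+(v 2)))) := by
  simp only [Fq, pderiv_mul, pderiv_pow, map_add, pderiv_X_self, pderiv_C,
    pd01, pd02, pd03, pd10, pd12, pd13, pd20, pd21, pd23, pd30, pd31, pd32,
    eval_X, eval_C, eval_pow, eval_mul, eval_add, map_mul, map_pow, mul_zero, zero_mul,
    mul_one, one_mul, add_zero, zero_add, map_one, map_ofNat, Nat.cast_ofNat, map_zero]
  ring

lemma ev4 (ω : K) (hch : (2:K) = 0) (v : Fin 4 → K) :
    eval v (pderiv 3 (Fq ω)) = 0 := by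
  simp only [Fq, pderiv_mul, pderiv_pow, map_add, pderiv_X_self, pderiv_C,
    pd01, pd02, pd03, pd10, pd12, pd13, pd20, pd21, pd23, pd30, pd31, pd32,
    eval_X, eval_C, eval_pow, eval_mul, eval_add, map_mul, map_pow, mul_zero, zero_mul,
    mul_one, one_mul, add_zero, zero_add, map_one, map_ofNat, Nat.cast_ofNat, map_zero]
  linear_combination (v 3 * (v 0 * v 1) + v 3 * v 2 ^ 2) * hch

lemma conv0 (ω : K) (hω : ω^2+ω+1 = 0) (hch : (2:K) = 0) (a b c d : K) :
    (d)^2*((a)*(b)+(c)^2) + (ω*((a)+(b)+(c))+(a))*(ω*((a)+(b)+(c))+(b))*(ω*((a)+(b)+(c)))*(ω*((a)+(b)+(c))+(a)+(b)) = (d)^2*((a)*(b)+(c)^2) + ω*((ω*(a)+(b)+(c))*((a)+ω*(b)+(c))*((a)+(b)+(c))*(ω*(a)+ω*(b)+(c))) := by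
  linear_combination (ω^2*a^4 + 3*ω^2*a^3*b + 4*ω^2*a^3*c + 4*ω^2*a^2*b^2 + 11*ω^2*a^2*b*c + 6*ω^2*a^2*c^2 + 3*ω^2*a*b^3 + 11*ω^2*a*b^2*c + 12*ω^2*a*b*c^2 + 4*ω^2*a*c^3 + ω^2*b^4 + 4*ω^2*b^3*c + 6*ω^2*b^2*c^2 + 4*ω^2*b*c^3 + ω^2*c^4 + 3*ω*a^3*b + 6*ω*a^2*b^2 + 2*ω*a^2*b*c - ω*a^2*c^2 + 3*ω*a*b^3 + 2*ω*a*b^2*c - 3*ω*a*b*c^2 - 2*ω*a*c^3 - ω*b^2*c^2 - 2*ω*b*c^3 - ω*c^4 - 2*a^3*b - 4*a^3*c - 4*a^2*b^2 - 10*a^2*b*c - 8*a^2*c^2 - 2*a*b^3 - 10*a*b^2*c - 12*a*b*c^2 - 4*a*c^3 - 4*b^3*c - 8*b^2*c^2 - 4*b*c^3)*hω + (2*ω*a^3*c + 4*ω*a^2*b*c + 4*ω*a^2*c^2 + 4*ω*a*b^2*c + 6*ω*a*b*c^2 + 2*ω*a*c^3 + 2*ω*b^3*c + 4*ω*b^2*c^2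 + 2*ω*b*c^3 + a^3*b + 2*a^3*c + 2*a^2*b^2 + 5*a^2*b*c + 4*a^2*c^2 + a*b^3 + 5*a*b^2*c + 6*a*b*c^2 + 2*a*c^3 + 2*b^3*c + 4*b^2*c^2 + 2*b*c^3)*hch

lemma conv1 (ω : K) (hω : ω^2+ω+1 = 0) (hch : (2:K) = 0) (a b c d : K) :
    (d)^2*(b) + (ω+1)*((ω*((a)+(b)+(c))+(b))*(ω*((a)+(b)+(c)))*(ω*((a)+(b)+(c))+(a)+(b))) + ω*((ω*((a)+(b)+(c))+(a))*(ω*((a)+(b)+(c)))*(ω*((a)+(b)+(c))+(a)+(b))) + ω*((ω*((a)+(b)+(c))+(a))*(ω*((a)+(b)+(c))+(b))*(ω*((a)+(b)+(c))+(a)+(b))) + (ω+1)*((ω*((a)+(b)+(c))+(a))*(ω*((a)+(b)+(c))+(b))*(ω*((a)+(b)+(c)))) = (b)*((a)^2+(b)^2+ω*(b)*(c)+(ω+1)*(c)^2+(d)^2) := by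
  linear_combination (4*ω^2*a^3 + 12*ω^2*a^2*b + 12*ω^2*a^2*c + 12*ω^2*a*b^2 + 24*ω^2*a*b*c + 12*ω^2*a*c^2 + 4*ω^2*b^3 + 12*ω^2*b^2*c + 12*ω^2*b*c^2 + 4*ω^2*c^3 + 4*ω*a^3 + 12*ω*a^2*b + 6*ω*a^2*c + 12*ω*a*b^2 + 12*ω*a*b*c + 4*ω*b^3 + 6*ω*b^2*c - 2*ω*c^3 - 4*a^3 - 9*a^2*b - 12*a^2*c - 8*a*b^2 - 20*a*b*c - 10*a*c^2 - 3*b^3 - 10*b^2*c - 9*b*c^2 - 2*c^3)*hω + (3*ω*a^2*c + 5*ω*a*b*c + 5*ω*a*c^2 + 2*ω*b^2*c + 4*ω*b*c^2 + 2*ω*c^3 + 2*a^3 + 4*a^2*b + 6*a^2*c + 4*a*b^2 + 10*a*b*c + 5*a*c^2 + b^3 + 5*b^2*c + 4*b*c^2 + c^3)*hch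

lemma conv2 (ω : K) (hω : ω^2+ω+1 = 0) (hch : (2:K) = 0) (a b c d : K) :
    (d)^2*(a) + ω*((ω*((a)+(b)+(c))+(b))*(ω*((a)+(b)+(c)))*(ω*((a)+(b)+(c))+(a)+(b))) + (ω+1)*((ω*((a)+(b)+(c))+(a))*(ω*((a)+(b)+(c)))*(ω*((a)+(b)+(c))+(a)+(b))) + ω*((ω*((a)+(b)+(c))+(a))*(ω*((a)+(b)+(c))+(b))*(ω*((a)+(b)+(c))+(a)+(b))) + (ω+1)*((ω*((a)+(b)+(c))+(a))*(ω*((a)+(b)+(c))+(b))*(ω*((a)+(b)+(c)))) = (a)*((a)^2+ω*(a)*(c)+(b)^2+(ω+1)*(c)^2+(d)^2) := by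
  linear_combination (4*ω^2*a^3 + 12*ω^2*a^2*b + 12*ω^2*a^2*c + 12*ω^2*a*b^2 + 24*ω^2*a*b*c + 12*ω^2*a*c^2 + 4*ω^2*b^3 + 12*ω^2*b^2*c + 12*ω^2*b*c^2 + 4*ω^2*c^3 + 4*ω*a^3 + 12*ω*a^2*b + 6*ω*a^2*c + 12*ω*a*b^2 + 12*ω*a*b*c + 4*ω*b^3 + 6*ω*b^2*c - 2*ω*c^3 - 3*a^3 - 8*a^2*b - 10*a^2*c - 9*a*b^2 - 20*a*b*c - 9*a*c^2 - 4*b^3 - 12*b^2*c - 10*b*c^2 - 2*c^3)*hω + (2*ω*a^2*c + 5*ω*a*b*c + 4*ω*a*c^2 + 3*ω*b^2*c + 5*ω*b*c^2 + 2*ω*c^3 + a^3 + 4*a^2*b + 5*a^2*c + 4*a*b^2 + 10*a*b*c + 4*a*c^2 + 2*b^3 + 6*b^2*c + 5*b*c^2 + c^3)*hch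

lemma conv3 (ω : K) (hω : ω^2+ω+1 = 0) (hch : (2:K) = 0) (a b c d : K) :
    2*((d)^2*(c)) + ω*((ω*((a)+(b)+(c))+(b))*(ω*((a)+(b)+(c)))*(ω*((a)+(b)+(c))+(a)+(b))) + ω*((ω*((a)+(b)+(c))+(a))*(ω*((a)+(b)+(c)))*(ω*((a)+(b)+(c))+(a)+(b))) + ω*((ω*((a)+(b)+(c))+(a))*(ω*((a)+(b)+(c))+(b))*(ω*((a)+(b)+(c))+(a)+(b))) + ω*((ω*((a)+(b)+(c))+(a))*(ω*((a)+(b)+(c))+(b))*(ω*((a)+(b)+(c)))) = ω*((a)*(b)*((a)+(b))) := by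
  linear_combination (4*ω^2*a^3 + 12*ω^2*a^2*b + 12*ω^2*a^2*c + 12*ω^2*a*b^2 + 24*ω^2*a*b*c + 12*ω^2*a*c^2 + 4*ω^2*b^3 + 12*ω^2*b^2*c + 12*ω^2*b*c^2 + 4*ω^2*c^3 + 2*ω*a^3 + 6*ω*a^2*b + 6*ω*a*b^2 - 6*ω*a*c^2 + 2*ω*b^3 - 6*ω*b*c^2 - 4*ω*c^3 - 4*a^3 - 10*a^2*b - 10*a^2*c - 10*a*b^2 - 18*a*b*c - 6*a*c^2 - 4*b^3 - 10*b^2*c - 6*b*c^2)*hω + (ω*a^3 + 2*ω*a^2*b + 5*ω*a^2*c + 2*ω*a*b^2 + 9*ω*a*b*c + 6*ω*a*c^2 + ω*b^3 + 5*ω*b^2*c + 6*ω*b*c^2 + 2*ω*c^3 + 2*a^3 + 5*a^2*b + 5*a^2*c + 5*a*b^2 + 9*a*b*c + 3*a*c^2 + 2*b^3 + 5*b^2*c + 3*b*c^2 + c*d^2)*hch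

lemma mk_eq_mk_of (v w : Fin 4 → K) (hv : v ≠ 0) (hw : w ≠ 0) (t : K) (ht : t ≠ 0)
    (h0 : v 0 = t * w 0) (h1 : v 1 = t * w 1) (h2 : v 2 = t * w 2) (h3 : v 3 = t * w 3) :
    Projectivization.mk K v hv = Projectivization.mk K w hw := by
  apply (Projectivization.mk_eq_mk_iff K v w hv hw).2
  refine ⟨Units.mk0 t ht, funext fun j => ?_⟩
  fin_cases j
  · simpa [Units.smul_def] using h0.symm
  · simpa [Units.smul_def] using h1.symm
  · simpa [Units.smul_def] using h2.symm
  · simpa [Units.smul_def] using h3.symm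

lemma mk_ne_of_zero (v w : Fin 4 → K) (hv : v ≠ 0) (hw : w ≠ 0) (i : Fin 4)
    (hvi : v i ≠ 0) (hwi : w i = 0) :
    Projectivization.mk K v hv ≠ Projectivization.mk K w hw := by
  intro he
  obtain ⟨u, hu⟩ := (Projectivization.mk_eq_mk_iff K v w hv hw).1 he
  apply hvi
  rw [← hu]
  simp [Units.smul_def, hwi]

lemma mk_ne_of_one (v w : Fin 4 → K) (hv : v ≠ 0) (hw : w ≠ 0) (j k : Fin 4)
    (hvj : v j = 1) (hwj : w j = 1) (hne : v k ≠ w k) :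
    Projectivization.mk K v hv ≠ Projectivization.mk K w hw := by
  intro he
  obtain ⟨u, hu⟩ := (Projectivization.mk_eq_mk_iff K v w hv hw).1 he
  have hj : (u:K) * w j = v j := by rw [← hu]; simp [Units.smul_def]
  rw [hvj, hwj, mul_one] at hj
  apply hne
  rw [← hu]
  simp [Units.smul_def, hj]

lemma mem_sing (ω : K) (hω : ω^2+ω+1 = 0) (hch : (2:K) = 0) (w : Fin 4 → K) (hw : w ≠ 0)
    (e0 : (w 3)^2*((w 0)*(w 1)+(w 2)^2) + ω*((ω*(w 0)+(w 1)+(w 2))*((w 0)+ω*(w 1)+(w 2))*((w 0)+(w 1)+(w 2))*(ω*(w 0)+ω*(w 1)+(w 2))) = 0)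
    (e1 : (w 1)*((w 0)^2+(w 1)^2+ω*(w 1)*(w 2)+(ω+1)*(w 2)^2+(w 3)^2) = 0)
    (e2 : (w 0)*((w 0)^2+ω*(w 0)*(w 2)+(w 1)^2+(ω+1)*(w 2)^2+(w 3)^2) = 0)
    (e3 : ω*((w 0)*(w 1)*((w 0)+(w 1))) = 0) :
    Projectivization.mk K w hw ∈ singLocus (Fq ω) := by
  intro v hv hmk
  obtain ⟨u, hu⟩ := (Projectivization.mk_eq_mk_iff K v w hv hw).1 hmk
  have hc : ∀ i, v i = (u:K) * w i := fun i => by rw [← hu]; simp [Units.smul_def]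
  constructor
  · rw [ev0 ω v, hc 0, hc 1, hc 2, hc 3]
    linear_combination ((u:K)^4)*e0 + (ω^2*w 0^4*(u:K)^4 + 3*ω^2*w 0^3*w 1*(u:K)^4 + 4*ω^2*w 0^3*w 2*(u:K)^4 + 4*ω^2*w 0^2*w 1^2*(u:K)^4 + 11*ω^2*w 0^2*w 1*w 2*(u:K)^4 + 6*ω^2*w 0^2*w 2^2*(u:K)^4 + 3*ω^2*w 0*w 1^3*(u:K)^4 + 11*ω^2*w 0*w 1^2*w 2*(u:K)^4 + 12*ω^2*w 0*w 1*w 2^2*(u:K)^4 + 4*ω^2*w 0*w 2^3*(u:K)^4 + ω^2*w 1^4*(u:K)^4 + 4*ω^2*w 1^3*w 2*(u:K)^4 + 6*ω^2*w 1^2*w 2^2*(u:K)^4 + 4*ω^2*w 1*w 2^3*(u:K)^4 + ω^2*w 2^4*(u:K)^4 + 3*ω*w 0^3*w 1*(u:K)^4 + 6*ω*w 0^2*w 1^2*(u:K)^4 + 2*ω*w 0^2*w 1*w 2*(u:K)^4 - ω*w 0^2*w 2^2*(u:K)^4 + 3*ω*w 0*w 1^3*(u:K)^4 + 2*ω*w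 0*w 1^2*w 2*(u:K)^4 - 3*ω*w 0*w 1*w 2^2*(u:K)^4 - 2*ω*w 0*w 2^3*(u:K)^4 - ω*w 1^2*w 2^2*(u:K)^4 - 2*ω*w 1*w 2^3*(u:K)^4 - ω*w 2^4*(u:K)^4 - 2*w 0^3*w 1*(u:K)^4 - 4*w 0^3*w 2*(u:K)^4 - 4*w 0^2*w 1^2*(u:K)^4 - 10*w 0^2*w 1*w 2*(u:K)^4 - 8*w 0^2*w 2^2*(u:K)^4 - 2*w 0*w 1^3*(u:K)^4 - 10*w 0*w 1^2*w 2*(u:K)^4 - 12*w 0*w 1*w 2^2*(u:K)^4 - 4*w 0*w 2^3*(u:K)^4 - 4*w 1^3*w 2*(u:K)^4 - 8*w 1^2*w 2^2*(u:K)^4 - 4*w 1*w 2^3*(u:K)^4)*hω + (2*ω*w 0^3*w 2*(u:K)^4 + 4*ω*w 0^2*w 1*w 2*(u:K)^4 + 4*ω*w 0^2*w 2^2*(u:K)^4 + 4*ω*w 0*w 1^2*w 2*(u:K)^4 + 6*ω*w 0*w 1*w 2^2*(u:K)^4 + 2*ω*w 0*w 2^3*(u:K)^4 + 2*ω*w 1^3*w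 2*(u:K)^4 + 4*ω*w 1^2*w 2^2*(u:K)^4 + 2*ω*w 1*w 2^3*(u:K)^4 + w 0^3*w 1*(u:K)^4 + 2*w 0^3*w 2*(u:K)^4 + 2*w 0^2*w 1^2*(u:K)^4 + 5*w 0^2*w 1*w 2*(u:K)^4 + 4*w 0^2*w 2^2*(u:K)^4 + w 0*w 1^3*(u:K)^4 + 5*w 0*w 1^2*w 2*(u:K)^4 + 6*w 0*w 1*w 2^2*(u:K)^4 + 2*w 0*w 2^3*(u:K)^4 + 2*w 1^3*w 2*(u:K)^4 + 4*w 1^2*w 2^2*(u:K)^4 + 2*w 1*w 2^3*(u:K)^4)*hch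
  · intro i
    fin_cases i
    · show eval v (pderiv 0 (Fq ω)) = 0
      rw [ev1 ω v, hc 0, hc 1, hc 2, hc 3]
      linear_combination ((u:K)^3)*e1 + (4*ω^2*w 0^3*(u:K)^3 + 12*ω^2*w 0^2*w 1*(u:K)^3 + 12*ω^2*w 0^2*w 2*(u:K)^3 + 12*ω^2*w 0*w 1^2*(u:K)^3 + 24*ω^2*w 0*w 1*w 2*(u:K)^3 + 12*ω^2*w 0*w 2^2*(u:K)^3 + 4*ω^2*w 1^3*(u:K)^3 + 12*ω^2*w 1^2*w 2*(u:K)^3 + 12*ω^2*w 1*w 2^2*(u:K)^3 + 4*ω^2*w 2^3*(u:K)^3 + 4*ω*w 0^3*(u:K)^3 + 12*ω*w 0^2*w 1*(u:K)^3 + 6*ω*w 0^2*w 2*(u:K)^3 + 12*ω*w 0*w 1^2*(u:K)^3 + 12*ω*w 0*w 1*w 2*(u:K)^3 + 4*ω*w 1^3*(u:K)^3 + 6*ω*w 1^2*w 2*(u:K)^3 - 2*ω*w 2^3*(u:K)^3 - 4*w 0^3*(u:K)^3 - 9*w 0^2*w 1*(u:K)^3 - 12*w 0^2*w 2*(u:K)^3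 - 8*w 0*w 1^2*(u:K)^3 - 20*w 0*w 1*w 2*(u:K)^3 - 10*w 0*w 2^2*(u:K)^3 - 3*w 1^3*(u:K)^3 - 10*w 1^2*w 2*(u:K)^3 - 9*w 1*w 2^2*(u:K)^3 - 2*w 2^3*(u:K)^3)*hω + (3*ω*w 0^2*w 2*(u:K)^3 + 5*ω*w 0*w 1*w 2*(u:K)^3 + 5*ω*w 0*w 2^2*(u:K)^3 + 2*ω*w 1^2*w 2*(u:K)^3 + 4*ω*w 1*w 2^2*(u:K)^3 + 2*ω*w 2^3*(u:K)^3 + 2*w 0^3*(u:K)^3 + 4*w 0^2*w 1*(u:K)^3 + 6*w 0^2*w 2*(u:K)^3 + 4*w 0*w 1^2*(u:K)^3 + 10*w 0*w 1*w 2*(u:K)^3 + 5*w 0*w 2^2*(u:K)^3 + w 1^3*(u:K)^3 + 5*w 1^2*w 2*(u:K)^3 + 4*w 1*w 2^2*(u:K)^3 + w 2^3*(u:K)^3)*hch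
    · show eval v (pderiv 1 (Fq ω)) = 0
      rw [ev2 ω v, hc 0, hc 1, hc 2, hc 3]
      linear_combination ((u:K)^3)*e2 + (4*ω^2*w 0^3*(u:K)^3 + 12*ω^2*w 0^2*w 1*(u:K)^3 + 12*ω^2*w 0^2*w 2*(u:K)^3 + 12*ω^2*w 0*w 1^2*(u:K)^3 + 24*ω^2*w 0*w 1*w 2*(u:K)^3 + 12*ω^2*w 0*w 2^2*(u:K)^3 + 4*ω^2*w 1^3*(u:K)^3 + 12*ω^2*w 1^2*w 2*(u:K)^3 + 12*ω^2*w 1*w 2^2*(u:K)^3 + 4*ω^2*w 2^3*(u:K)^3 + 4*ω*w 0^3*(u:K)^3 + 12*ω*w 0^2*w 1*(u:K)^3 + 6*ω*w 0^2*w 2*(u:K)^3 + 12*ω*w 0*w 1^2*(u:K)^3 + 12*ω*w 0*w 1*w 2*(u:K)^3 + 4*ω*w 1^3*(u:K)^3 + 6*ω*w 1^2*w 2*(u:K)^3 - 2*ω*w 2^3*(u:K)^3 - 3*w 0^3*(u:K)^3 - 8*w 0^2*w 1*(u:K)^3 - 10*w 0^2*w 2*(u:K)^3 - 9*w 0*w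 1^2*(u:K)^3 - 20*w 0*w 1*w 2*(u:K)^3 - 9*w 0*w 2^2*(u:K)^3 - 4*w 1^3*(u:K)^3 - 12*w 1^2*w 2*(u:K)^3 - 10*w 1*w 2^2*(u:K)^3 - 2*w 2^3*(u:K)^3)*hω + (2*ω*w 0^2*w 2*(u:K)^3 + 5*ω*w 0*w 1*w 2*(u:K)^3 + 4*ω*w 0*w 2^2*(u:K)^3 + 3*ω*w 1^2*w 2*(u:K)^3 + 5*ω*w 1*w 2^2*(u:K)^3 + 2*ω*w 2^3*(u:K)^3 + w 0^3*(u:K)^3 + 4*w 0^2*w 1*(u:K)^3 + 5*w 0^2*w 2*(u:K)^3 + 4*w 0*w 1^2*(u:K)^3 + 10*w 0*w 1*w 2*(u:K)^3 + 4*w 0*w 2^2*(u:K)^3 + 2*w 1^3*(u:K)^3 + 6*w 1^2*w 2*(u:K)^3 + 5*w 1*w 2^2*(u:K)^3 + w 2^3*(u:K)^3)*hch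
    · show eval v (pderiv 2 (Fq ω)) = 0
      rw [ev3 ω v, hc 0, hc 1, hc 2, hc 3]
      linear_combination ((u:K)^3)*e3 + (4*ω^2*w 0^3*(u:K)^3 + 12*ω^2*w 0^2*w 1*(u:K)^3 + 12*ω^2*w 0^2*w 2*(u:K)^3 + 12*ω^2*w 0*w 1^2*(u:K)^3 + 24*ω^2*w 0*w 1*w 2*(u:K)^3 + 12*ω^2*w 0*w 2^2*(u:K)^3 + 4*ω^2*w 1^3*(u:K)^3 + 12*ω^2*w 1^2*w 2*(u:K)^3 + 12*ω^2*w 1*w 2^2*(u:K)^3 + 4*ω^2*w 2^3*(u:K)^3 + 2*ω*w 0^3*(u:K)^3 + 6*ω*w 0^2*w 1*(u:K)^3 + 6*ω*w 0*w 1^2*(u:K)^3 - 6*ω*w 0*w 2^2*(u:K)^3 + 2*ω*w 1^3*(u:K)^3 - 6*ω*w 1*w 2^2*(u:K)^3 - 4*ω*w 2^3*(u:K)^3 - 4*w 0^3*(u:K)^3 - 10*w 0^2*w 1*(u:K)^3 - 10*w 0^2*w 2*(u:K)^3 - 10*w 0*w 1^2*(u:K)^3 - 18*w 0*w 1*w 2*(u:K)^3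 - 6*w 0*w 2^2*(u:K)^3 - 4*w 1^3*(u:K)^3 - 10*w 1^2*w 2*(u:K)^3 - 6*w 1*w 2^2*(u:K)^3)*hω + (ω*w 0^3*(u:K)^3 + 2*ω*w 0^2*w 1*(u:K)^3 + 5*ω*w 0^2*w 2*(u:K)^3 + 2*ω*w 0*w 1^2*(u:K)^3 + 9*ω*w 0*w 1*w 2*(u:K)^3 + 6*ω*w 0*w 2^2*(u:K)^3 + ω*w 1^3*(u:K)^3 + 5*ω*w 1^2*w 2*(u:K)^3 + 6*ω*w 1*w 2^2*(u:K)^3 + 2*ω*w 2^3*(u:K)^3 + 2*w 0^3*(u:K)^3 + 5*w 0^2*w 1*(u:K)^3 + 5*w 0^2*w 2*(u:K)^3 + 5*w 0*w 1^2*(u:K)^3 + 9*w 0*w 1*w 2*(u:K)^3 + 3*w 0*w 2^2*(u:K)^3 + 2*w 1^3*(u:K)^3 + 5*w 1^2*w 2*(u:K)^3 + 3*w 1*w 2^2*(u:K)^3 + w 2*w 3^2*(u:K)^3)*hch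
    · show eval v (pderiv 3 (Fq ω)) = 0
      exact ev4 ω hch v

lemma classify (ω s a b c d : K) (hω : ω^2+ω+1 = 0) (hs : s^2+s+ω+1 = 0) (hch : (2:K) = 0)
    (h0 : (d)^2*((a)*(b)+(c)^2) + ω*((ω*(a)+(b)+(c))*((a)+ω*(b)+(c))*((a)+(b)+(c))*(ω*(a)+ω*(b)+(c))) = 0)
    (h1 : (b)*((a)^2+(b)^2+ω*(b)*(c)+(ω+1)*(c)^2+(d)^2) = 0)
    (h2 : (a)*((a)^2+ω*(a)*(c)+(b)^2+(ω+1)*(c)^2+(d)^2) = 0)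
    (h3 : ω*((a)*(b)*((a)+(b))) = 0)
    (hv : ¬(a = 0 ∧ b = 0 ∧ c = 0 ∧ d = 0)) :
    (∃ t:K, t ≠ 0 ∧ a = t*(1) ∧ b = t*(0) ∧ c = t*(1) ∧ d = t*(0)) ∨
    (∃ t:K, t ≠ 0 ∧ a = t*(1) ∧ b = t*(0) ∧ c = t*(s) ∧ d = t*(s)) ∨
    (∃ t:K, t ≠ 0 ∧ a = t*(1) ∧ b = t*(0) ∧ c = t*(s+1) ∧ d = t*(s+1)) ∨
    (∃ t:K, t ≠ 0 ∧ a = t*(1) ∧ b = t*(0) ∧ c = t*(ω) ∧ d = t*(0)) ∨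
    (∃ t:K, t ≠ 0 ∧ a = t*(1) ∧ b = t*(1) ∧ c = t*(0) ∧ d = t*(0)) ∨
    (∃ t:K, t ≠ 0 ∧ a = t*(1) ∧ b = t*(1) ∧ c = t*(s) ∧ d = t*(s+1)) ∨
    (∃ t:K, t ≠ 0 ∧ a = t*(1) ∧ b = t*(1) ∧ c = t*(s+1) ∧ d = t*(s)) ∨
    (∃ t:K, t ≠ 0 ∧ a = t*(1) ∧ b = t*(1) ∧ c = t*(ω+1) ∧ d = t*(0)) ∨
    (∃ t:K, t ≠ 0 ∧ a = t*(0) ∧ b = t*(1) ∧ c = t*(1) ∧ d = t*(0)) ∨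
    (∃ t:K, t ≠ 0 ∧ a = t*(0) ∧ b = t*(1) ∧ c = t*(s) ∧ d = t*(s)) ∨
    (∃ t:K, t ≠ 0 ∧ a = t*(0) ∧ b = t*(1) ∧ c = t*(s+1) ∧ d = t*(s+1)) ∨
    (∃ t:K, t ≠ 0 ∧ a = t*(0) ∧ b = t*(1) ∧ c = t*(ω) ∧ d = t*(0)) ∨
    (∃ t:K, t ≠ 0 ∧ a = t*(0) ∧ b = t*(0) ∧ c = t*(1) ∧ d = t*(ω+1)) ∨
    (∃ t:K, t ≠ 0 ∧ a = t*(0) ∧ b = t*(0) ∧ c = t*(0) ∧ d = t*(1)) := by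
  have hω0 : ω ≠ 0 := fun h => one_ne_zero (α := K) (by rw [h] at hω; linear_combination hω)
  have hab : (a)*(b)*((a)+(b)) = 0 := by
    rcases mul_eq_zero.1 h3 with h | h
    · exact absurd h hω0
    · exact h
  rcases eq_or_ne a 0 with ha | ha
  · subst ha
    rcases eq_or_ne b 0 with hb | hb
    · subst hb
      have hcd : c^2*(d^2 + ω*c^2) = 0 := by linear_combination h0
      rcases mul_eq_zero.1 hcd with h | h
      · have hc : c = 0 := sq_eq_zero_iff.mp h
        have hd : d ≠ 0 := fun hd => hv ⟨rfl, rfl, hc, hd⟩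
        exact Or.inr (Or.inr (Or.inr (Or.inr (Or.inr (Or.inr (Or.inr (Or.inr (Or.inr (Or.inr (Or.inr (Or.inr (Or.inr (⟨d, hd, by ring, by ring, by linear_combination hc, by ring⟩)))))))))))))
      · have hsq : (d + (ω+1)*c)^2 = 0 := by linear_combination h + (c^2)*hω + (ω*c*d + c*d)*hch
        have hd : d = (ω+1)*c := by
          have h' := sq_eq_zero_iff.mp hsq
          linear_combination h' - (ω+1)*c*hch
        have hcne : c ≠ 0 := fun h0c => hv ⟨rfl, rfl, h0c, by rw [hd, h0c]; ring⟩
        exact Or.inr (Or.inr (Or.inr (Or.inr (Or.inr (Or.inr (Or.inr (Or.inr (Or.inr (Or.inr (Or.inr (Or.inr (Or.inl (⟨c, hcne, by ring, by ring, by ring, by linear_combination hd⟩)))))))))))))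
    · have hA : b^2 + ω*b*c + (ω+1)*c^2 + d^2 = 0 := by
        rcases mul_eq_zero.1 h1 with h | h
        · exact absurd h hb
        · linear_combination h
      have key : (c+b)*(c+ω*b)*((c+s*b)*(c+(s+1)*b)) = 0 := by linear_combination h0 + (c^2)*hA + (-ω*b^4 - 2*ω*b^3*c - ω*b^2*c^2 - b^3*c - 3*b^2*c^2 - 2*b*c^3)*hω + (ω*b^4 + ω*b^3*c + b^3*c + b^2*c^2)*hs + (ω*s*b^3*c + ω*s*b^2*c^2 + ω*b^3*c + 2*ω*b^2*c^2 - ω*c^4 + s*b^2*c^2 + s*b*c^3 + b^2*c^2 + 2*b*c^3 - c^2*d^2)*hch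
      rcases mul_eq_zero.1 key with h12 | h34
      · rcases mul_eq_zero.1 h12 with hf | hf
        · have hcb : c = b := by linear_combination hf - b*hch
          have hdd : d^2 = 0 := by linear_combination hA + (-2*ω*b - ω*c - b - c)*hcb + (-ω*b^2 - b^2)*hch
          have hd : d = 0 := sq_eq_zero_iff.mp hdd
          exact Or.inr (Or.inr (Or.inr (Or.inr (Or.inr (Or.inr (Or.inr (Or.inr (Or.inl (⟨b, hb, by ring, by ring, by linear_combination hcb, by linear_combination hd⟩)))))))))
        · have hcb : c = ω*b := by linear_combination hf - ω*b*hch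
          have hdd : d^2 = 0 := by linear_combination hA + (-ω^2*b - 2*ω*b - ω*c - c)*hcb + (-ω*b^2 - b^2)*hω + (ω*b^2)*hch
          have hd : d = 0 := sq_eq_zero_iff.mp hdd
          exact Or.inr (Or.inr (Or.inr (Or.inr (Or.inr (Or.inr (Or.inr (Or.inr (Or.inr (Or.inr (Or.inr (Or.inl (⟨b, hb, by ring, by ring, by linear_combination hcb, by linear_combination hd⟩))))))))))))
      · rcases mul_eq_zero.1 h34 with hf | hf
        · have hcb : c = s*b := by linear_combination hf - s*b*hch
          have hsq : (d + s*b)^2 = 0 := by linear_combination hA + (-ω*s*b - ω*b - ω*c - s*b - c)*hcb + (b^2)*hω + (-ω*b^2)*hs + (s*b*d - b^2)*hch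
          have hd : d = s*b := by
            have h' := sq_eq_zero_iff.mp hsq
            linear_combination h' - (s*b)*hch
          exact Or.inr (Or.inr (Or.inr (Or.inr (Or.inr (Or.inr (Or.inr (Or.inr (Or.inr (Or.inl (⟨b, hb, by ring, by ring, by linear_combination hcb, by linear_combination hd⟩))))))))))
        · have hcb : c = (s+1)*b := by linear_combination hf - (s+1)*b*hch
          have hsq : (d + (s+1)*b)^2 = 0 := by linear_combination hA + (-ω*s*b - 2*ω*b - ω*c - s*b - b - c)*hcb + (b^2)*hω + (-ω*b^2)*hs + (-ω*s*b^2 - ω*b^2 + s*b*d - b^2 + b*d)*hch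
          have hd : d = (s+1)*b := by
            have h' := sq_eq_zero_iff.mp hsq
            linear_combination h' - ((s+1)*b)*hch
          exact Or.inr (Or.inr (Or.inr (Or.inr (Or.inr (Or.inr (Or.inr (Or.inr (Or.inr (Or.inr (Or.inl (⟨b, hb, by ring, by ring, by linear_combination hcb, by linear_combination hd⟩)))))))))))
  · have hBB0 : a^2 + ω*a*c + b^2 + (ω+1)*c^2 + d^2 = 0 := by
      rcases mul_eq_zero.1 h2 with h | h
      · exact absurd h ha
      · linear_combination h
    rcases eq_or_ne b 0 with hb | hb
    · subst hb
      have hBB : a^2 + ω*a*c + (ω+1)*c^2 + d^2 = 0 := by linear_combination hBB0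
      have key : (c+a)*(c+ω*a)*((c+s*a)*(c+(s+1)*a)) = 0 := by linear_combination h0 + (c^2)*hBB + (-ω*a^4 - 2*ω*a^3*c - ω*a^2*c^2 - a^3*c - 3*a^2*c^2 - 2*a*c^3)*hω + (ω*a^4 + ω*a^3*c + a^3*c + a^2*c^2)*hs + (ω*s*a^3*c + ω*s*a^2*c^2 + ω*a^3*c + 2*ω*a^2*c^2 - ω*c^4 + s*a^2*c^2 + s*a*c^3 + a^2*c^2 + 2*a*c^3 - c^2*d^2)*hch
      rcases mul_eq_zero.1 key with h12 | h34
      · rcases mul_eq_zero.1 h12 with hf | hf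
        · have hca : c = a := by linear_combination hf - a*hch
          have hdd : d^2 = 0 := by linear_combination hBB + (-2*ω*a - ω*c - a - c)*hca + (-ω*a^2 - a^2)*hch
          have hd : d = 0 := sq_eq_zero_iff.mp hdd
          exact Or.inl (⟨a, ha, by ring, by ring, by linear_combination hca, by linear_combination hd⟩)
        · have hca : c = ω*a := by linear_combination hf - ω*a*hch
          have hdd : d^2 = 0 := by linear_combination hBB + (-ω^2*a - 2*ω*a - ω*c - c)*hca + (-ω*a^2 - a^2)*hω + (ω*a^2)*hch
          have hd : d = 0 := sq_eq_zero_iff.mp hdd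
          exact Or.inr (Or.inr (Or.inr (Or.inl (⟨a, ha, by ring, by ring, by linear_combination hca, by linear_combination hd⟩))))
      · rcases mul_eq_zero.1 h34 with hf | hf
        · have hca : c = s*a := by linear_combination hf - s*a*hch
          have hsq : (d + s*a)^2 = 0 := by linear_combination hBB + (-ω*s*a - ω*a - ω*c - s*a - c)*hca + (a^2)*hω + (-ω*a^2)*hs + (s*a*d - a^2)*hch
          have hd : d = s*a := by
            have h' := sq_eq_zero_iff.mp hsq
            linear_combination h' - (s*a)*hch
          exact Or.inr (Or.inl (⟨a, ha, by ring, by ring, by linear_combination hca, by linear_combination hd⟩))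
        · have hca : c = (s+1)*a := by linear_combination hf - (s+1)*a*hch
          have hsq : (d + (s+1)*a)^2 = 0 := by linear_combination hBB + (-ω*s*a - 2*ω*a - ω*c - s*a - a - c)*hca + (a^2)*hω + (-ω*a^2)*hs + (-ω*s*a^2 - ω*a^2 + s*a*d - a^2 + a*d)*hch
          have hd : d = (s+1)*a := by
            have h' := sq_eq_zero_iff.mp hsq
            linear_combination h' - ((s+1)*a)*hch
          exact Or.inr (Or.inr (Or.inl (⟨a, ha, by ring, by ring, by linear_combination hca, by linear_combination hd⟩)))
    · rcases mul_eq_zero.1 hab with h | hf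
      · rcases mul_eq_zero.1 h with h' | h'
        · exact absurd h' ha
        · exact absurd h' hb
      · have hba : b = a := by linear_combination hf - a*hch
        have hC : ω*a*c + (ω+1)*c^2 + d^2 = 0 := by linear_combination hBB0 + (-a - b)*hba + (-a^2)*hch
        have key : c*((c+(ω+1)*a)*((c+s*a)*(c+(s+1)*a))) = 0 := by linear_combination h0 + (a^2 + c^2)*hC + (-4*ω^4*a^3 - 3*ω^4*a^2*b - 2*ω^4*a^2*c - ω^4*a*b^2 - ω^4*a*b*c - 7*ω^3*a^3 - 5*ω^3*a^2*b - 12*ω^3*a^2*c - 3*ω^3*a*b^2 - 7*ω^3*a*b*c - 4*ω^3*a*c^2 - ω^3*b^3 - 2*ω^3*b^2*c - ω^3*b*c^2 - 4*ω^2*a^3 - 3*ω^2*a^2*b - 12*ω^2*a^2*c - ω^2*a*b^2 - 7*ω^2*a*b*c - 10*ω^2*a*c^2 - 2*ω^2*b^2*c - 4*ω^2*b*c^2 - 2*ω^2*c^3 - 2*ω*a^2*c - ω*a*b*c - 4*ω*a*c^2 - ω*b*c^2 - 2*ω*c^3 - a*d^2)*hba + (-4*ω^2*a^4 - 2*ω^2*a^3*c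 - 4*ω*a^4 - 12*ω*a^3*c - 5*ω*a^2*c^2 + 4*a^4 - a^3*c - 9*a^2*c^2 - 4*a*c^3)*hω + (ω*a^3*c + a^3*c + a^2*c^2)*hs + (ω*s*a^2*c^2 + 4*ω*a^3*c + 4*ω*a^2*c^2 - ω*c^4 + s*a^2*c^2 + s*a*c^3 - 2*a^4 + 4*a^2*c^2 - a^2*d^2 + 3*a*c^3 - c^2*d^2)*hch
        rcases mul_eq_zero.1 key with hc0 | h'
        · subst hc0
          have hdd : d^2 = 0 := by linear_combination hC
          have hd : d = 0 := sq_eq_zero_iff.mp hdd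
          exact Or.inr (Or.inr (Or.inr (Or.inr (Or.inl (⟨a, ha, by ring, by linear_combination hba, by ring, by linear_combination hd⟩)))))
        · rcases mul_eq_zero.1 h' with hf' | h''
          · have hca : c = (ω+1)*a := by linear_combination hf' - (ω+1)*a*hch
            have hdd : d^2 = 0 := by linear_combination hC + (-ω^2*a - 3*ω*a - ω*c - a - c)*hca + (-ω*a^2 - 3*a^2)*hω + (a^2)*hch
            have hd : d = 0 := sq_eq_zero_iff.mp hdd
            exact Or.inr (Or.inr (Or.inr (Or.inr (Or.inr (Or.inr (Or.inr (Or.inl (⟨a, ha, by ring, by linear_combination hba, by linear_combination hca, by linear_combination hd⟩))))))))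
          · rcases mul_eq_zero.1 h'' with hf' | hf'
            · have hca : c = s*a := by linear_combination hf' - s*a*hch
              have hsq : (d + (s+1)*a)^2 = 0 := by linear_combination hC + (-ω*s*a - ω*a - ω*c - s*a - c)*hca + (a^2)*hω + (-ω*a^2)*hs + (s*a^2 + s*a*d + a*d)*hch
              have hd : d = (s+1)*a := by
                have h' := sq_eq_zero_iff.mp hsq
                linear_combination h' - ((s+1)*a)*hch
              exact Or.inr (Or.inr (Or.inr (Or.inr (Or.inr (Or.inl (⟨a, ha, by ring, by linear_combination hba, by linear_combination hca, by linear_combination hd⟩))))))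
            · have hca : c = (s+1)*a := by linear_combination hf' - (s+1)*a*hch
              have hsq : (d + s*a)^2 = 0 := by linear_combination hC + (-ω*s*a - 2*ω*a - ω*c - s*a - a - c)*hca + (a^2)*hω + (-ω*a^2)*hs + (-ω*s*a^2 - ω*a^2 - s*a^2 + s*a*d - a^2)*hch
              have hd : d = s*a := by
                have h' := sq_eq_zero_iff.mp hsq
                linear_combination h' - (s*a)*hch
              exact Or.inr (Or.inr (Or.inr (Or.inr (Or.inr (Or.inr (Or.inl (⟨a, ha, by ring, by linear_combination hba, by linear_combination hca, by linear_combination hd⟩)))))))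


def w1 (ω s : K) : Fin 4 → K := ![(1), (0), (1), (0)]
def w2 (ω s : K) : Fin 4 → K := ![(1), (0), (s), (s)]
def w3 (ω s : K) : Fin 4 → K := ![(1), (0), (s+1), (s+1)]
def w4 (ω s : K) : Fin 4 → K := ![(1), (0), (ω), (0)]
def w5 (ω s : K) : Fin 4 → K := ![(1), (1), (0), (0)]
def w6 (ω s : K) : Fin 4 → K := ![(1), (1), (s), (s+1)]
def w7 (ω s : K) : Fin 4 → K := ![(1), (1), (s+1), (s)]
def w8 (ω s : K) : Fin 4 → K := ![(1), (1), (ω+1), (0)]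
def w9 (ω s : K) : Fin 4 → K := ![(0), (1), (1), (0)]
def w10 (ω s : K) : Fin 4 → K := ![(0), (1), (s), (s)]
def w11 (ω s : K) : Fin 4 → K := ![(0), (1), (s+1), (s+1)]
def w12 (ω s : K) : Fin 4 → K := ![(0), (1), (ω), (0)]
def w13 (ω s : K) : Fin 4 → K := ![(0), (0), (1), (ω+1)]
def w14 (ω s : K) : Fin 4 → K := ![(0), (0), (0), (1)]

lemma hw1 (ω s : K) : w1 ω s ≠ (0 : Fin 4 → K) := fun h => one_ne_zero (congrFun h 0)
lemma hw2 (ω s : K) : w2 ω s ≠ (0 : Fin 4 → K) := fun h => one_ne_zero (congrFun h 0)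
lemma hw3 (ω s : K) : w3 ω s ≠ (0 : Fin 4 → K) := fun h => one_ne_zero (congrFun h 0)
lemma hw4 (ω s : K) : w4 ω s ≠ (0 : Fin 4 → K) := fun h => one_ne_zero (congrFun h 0)
lemma hw5 (ω s : K) : w5 ω s ≠ (0 : Fin 4 → K) := fun h => one_ne_zero (congrFun h 0)
lemma hw6 (ω s : K) : w6 ω s ≠ (0 : Fin 4 → K) := fun h => one_ne_zero (congrFun h 0)
lemma hw7 (ω s : K) : w7 ω s ≠ (0 : Fin 4 → K) := fun h => one_ne_zero (congrFun h 0)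
lemma hw8 (ω s : K) : w8 ω s ≠ (0 : Fin 4 → K) := fun h => one_ne_zero (congrFun h 0)
lemma hw9 (ω s : K) : w9 ω s ≠ (0 : Fin 4 → K) := fun h => one_ne_zero (congrFun h 1)
lemma hw10 (ω s : K) : w10 ω s ≠ (0 : Fin 4 → K) := fun h => one_ne_zero (congrFun h 1)
lemma hw11 (ω s : K) : w11 ω s ≠ (0 : Fin 4 → K) := fun h => one_ne_zero (congrFun h 1)
lemma hw12 (ω s : K) : w12 ω s ≠ (0 : Fin 4 → K) := fun h => one_ne_zero (congrFun h 1)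
lemma hw13 (ω s : K) : w13 ω s ≠ (0 : Fin 4 → K) := fun h => one_ne_zero (congrFun h 2)
lemma hw14 (ω s : K) : w14 ω s ≠ (0 : Fin 4 → K) := fun h => one_ne_zero (congrFun h 3)

def pt1 (ω s : K) : Projectivization K (Fin 4 → K) := Projectivization.mk K (w1 ω s) (hw1 ω s)
def pt2 (ω s : K) : Projectivization K (Fin 4 → K) := Projectivization.mk K (w2 ω s) (hw2 ω s)
def pt3 (ω s : K) : Projectivization K (Fin 4 → K) := Projectivization.mk K (w3 ω s) (hw3 ω s)
def pt4 (ω s : K) : Projectivization K (Fin 4 → K) := Projectivization.mk K (w4 ω s) (hw4 ω s)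
def pt5 (ω s : K) : Projectivization K (Fin 4 → K) := Projectivization.mk K (w5 ω s) (hw5 ω s)
def pt6 (ω s : K) : Projectivization K (Fin 4 → K) := Projectivization.mk K (w6 ω s) (hw6 ω s)
def pt7 (ω s : K) : Projectivization K (Fin 4 → K) := Projectivization.mk K (w7 ω s) (hw7 ω s)
def pt8 (ω s : K) : Projectivization K (Fin 4 → K) := Projectivization.mk K (w8 ω s) (hw8 ω s)
def pt9 (ω s : K) : Projectivization K (Fin 4 → K) := Projectivization.mk K (w9 ω s) (hw9 ω s)
def pt10 (ω s : K) : Projectivization K (Fin 4 → K) := Projectivization.mk K (w10 ω s) (hw10 ω s)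
def pt11 (ω s : K) : Projectivization K (Fin 4 → K) := Projectivization.mk K (w11 ω s) (hw11 ω s)
def pt12 (ω s : K) : Projectivization K (Fin 4 → K) := Projectivization.mk K (w12 ω s) (hw12 ω s)
def pt13 (ω s : K) : Projectivization K (Fin 4 → K) := Projectivization.mk K (w13 ω s) (hw13 ω s)
def pt14 (ω s : K) : Projectivization K (Fin 4 → K) := Projectivization.mk K (w14 ω s) (hw14 ω s)

end Quartic14

set_option maxHeartbeats 3200000 in
open Quartic14 in
theorem exists_quartic_with_fourteen_singular_points
    {K : Type*} [Field K] [IsAlgClosed K] [CharP K 2] :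
    ∃ a₁ a₂ a₃ : K, a₃ ≠ 0 ∧
      ∀ y₃ : MvPolynomial (Fin 4) K,
        y₃ = C a₁ * X 0 + C a₂ * X 1 + C a₃ * X 2 →
        (singLocus (X 3 ^ 2 * (X 0 * X 1 + X 2 ^ 2)
          + (y₃ + X 0) * (y₃ + X 1) * y₃ * (y₃ + X 0 + X 1))).ncard = 14 := by
  classical
  have hch : (2:K) = 0 := by
    have h := CharP.cast_eq_zero K 2
    exact_mod_cast h
  obtain ⟨ω, hωr⟩ := IsAlgClosed.exists_root
      (p := (Polynomial.X^2 + Polynomial.X + 1 : Polynomial K)) (by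
    have hdeg : (Polynomial.X^2 + Polynomial.X + 1 : Polynomial K).degree = 2 := by
      compute_degree!
    rw [hdeg]
    decide)
  have hω : ω^2 + ω + 1 = 0 := by
    have h := hωr
    simp only [Polynomial.IsRoot, Polynomial.eval_add, Polynomial.eval_pow, Polynomial.eval_X,
      Polynomial.eval_one] at h
    linear_combination h
  have hω0 : ω ≠ 0 := fun h => one_ne_zero (α := K) (by rw [h] at hω; linear_combination hω)
  obtain ⟨s, hsr⟩ := IsAlgClosed.exists_root
      (p := (Polynomial.X^2 + Polynomial.X + Polynomial.C (ω+1) : Polynomial K)) (by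
    have hdeg : (Polynomial.X^2 + Polynomial.X + Polynomial.C (ω+1) : Polynomial K).degree = 2 := by
      compute_degree!
    rw [hdeg]
    decide)
  have hs : s^2 + s + ω + 1 = 0 := by
    have h := hsr
    simp only [Polynomial.IsRoot, Polynomial.eval_add, Polynomial.eval_pow, Polynomial.eval_X,
      Polynomial.eval_C] at h
    linear_combination h
  have h10 : (1:K) ≠ 0 := one_ne_zero
  have hω1 : ω ≠ 1 := by
    intro h
    apply one_ne_zero (α := K)
    rw [h] at hω
    linear_combination hω - hch
  have hω10 : ω + 1 ≠ 0 := by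
    intro h
    apply hω1
    linear_combination h - hch
  have hs0 : s ≠ 0 := by
    intro h
    apply hω10
    rw [h] at hs
    linear_combination hs
  have hs1 : s ≠ 1 := by
    intro h
    apply hω10
    rw [h] at hs
    linear_combination hs - hch
  have hsω : s ≠ ω := by
    intro h
    apply hω0
    rw [h] at hs
    linear_combination hs - hω
  have hsω1 : s ≠ ω + 1 := by
    intro h
    apply hω0
    rw [h] at hs
    linear_combination hs - hω - (ω+1)*hch
  refine ⟨ω, ω, ω, hω0, ?_⟩
  intro y₃ hy
  subst hy
  show (singLocus (Fq ω)).ncard = 14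
  have d_1_2 : pt1 ω s ≠ pt2 ω s := mk_ne_of_one (w1 ω s) (w2 ω s) (hw1 ω s) (hw2 ω s) 0 2 rfl rfl (fun h => hs1 h.symm)
  have d_1_3 : pt1 ω s ≠ pt3 ω s := mk_ne_of_one (w1 ω s) (w3 ω s) (hw1 ω s) (hw3 ω s) 0 2 rfl rfl (fun h => hs0 (by have h' : (1:K) = s+1 := h; linear_combination -h'))
  have d_1_4 : pt1 ω s ≠ pt4 ω s := mk_ne_of_one (w1 ω s) (w4 ω s) (hw1 ω s) (hw4 ω s) 0 2 rfl rfl (fun h => hω1 h.symm)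
  have d_2_3 : pt2 ω s ≠ pt3 ω s := mk_ne_of_one (w2 ω s) (w3 ω s) (hw2 ω s) (hw3 ω s) 0 2 rfl rfl (fun h => h10 (by have h' : (s:K) = s+1 := h; linear_combination -h'))
  have d_2_4 : pt2 ω s ≠ pt4 ω s := mk_ne_of_one (w2 ω s) (w4 ω s) (hw2 ω s) (hw4 ω s) 0 2 rfl rfl (fun h => hsω h)
  have d_3_4 : pt3 ω s ≠ pt4 ω s := mk_ne_of_one (w3 ω s) (w4 ω s) (hw3 ω s) (hw4 ω s) 0 2 rfl rfl (fun h => hsω1 (by have h' : (s+1:K) = ω := h; linear_combination h' - hch))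
  have d_5_6 : pt5 ω s ≠ pt6 ω s := mk_ne_of_one (w5 ω s) (w6 ω s) (hw5 ω s) (hw6 ω s) 0 2 rfl rfl (fun h => hs0 h.symm)
  have d_5_7 : pt5 ω s ≠ pt7 ω s := mk_ne_of_one (w5 ω s) (w7 ω s) (hw5 ω s) (hw7 ω s) 0 2 rfl rfl (fun h => hs1 (by have h' : (0:K) = s+1 := h; linear_combination -h' - hch))
  have d_5_8 : pt5 ω s ≠ pt8 ω s := mk_ne_of_one (w5 ω s) (w8 ω s) (hw5 ω s) (hw8 ω s) 0 2 rfl rfl (fun h => hω10 h.symm)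
  have d_6_7 : pt6 ω s ≠ pt7 ω s := mk_ne_of_one (w6 ω s) (w7 ω s) (hw6 ω s) (hw7 ω s) 0 2 rfl rfl (fun h => h10 (by have h' : (s:K) = s+1 := h; linear_combination -h'))
  have d_6_8 : pt6 ω s ≠ pt8 ω s := mk_ne_of_one (w6 ω s) (w8 ω s) (hw6 ω s) (hw8 ω s) 0 2 rfl rfl (fun h => hsω1 h)
  have d_7_8 : pt7 ω s ≠ pt8 ω s := mk_ne_of_one (w7 ω s) (w8 ω s) (hw7 ω s) (hw8 ω s) 0 2 rfl rfl (fun h => hsω (by have h' : (s+1:K) = ω+1 := h; linear_combination h'))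
  have d_9_10 : pt9 ω s ≠ pt10 ω s := mk_ne_of_one (w9 ω s) (w10 ω s) (hw9 ω s) (hw10 ω s) 1 2 rfl rfl (fun h => hs1 h.symm)
  have d_9_11 : pt9 ω s ≠ pt11 ω s := mk_ne_of_one (w9 ω s) (w11 ω s) (hw9 ω s) (hw11 ω s) 1 2 rfl rfl (fun h => hs0 (by have h' : (1:K) = s+1 := h; linear_combination -h'))
  have d_9_12 : pt9 ω s ≠ pt12 ω s := mk_ne_of_one (w9 ω s) (w12 ω s) (hw9 ω s) (hw12 ω s) 1 2 rfl rfl (fun h => hω1 h.symm)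
  have d_10_11 : pt10 ω s ≠ pt11 ω s := mk_ne_of_one (w10 ω s) (w11 ω s) (hw10 ω s) (hw11 ω s) 1 2 rfl rfl (fun h => h10 (by have h' : (s:K) = s+1 := h; linear_combination -h'))
  have d_10_12 : pt10 ω s ≠ pt12 ω s := mk_ne_of_one (w10 ω s) (w12 ω s) (hw10 ω s) (hw12 ω s) 1 2 rfl rfl (fun h => hsω h)
  have d_11_12 : pt11 ω s ≠ pt12 ω s := mk_ne_of_one (w11 ω s) (w12 ω s) (hw11 ω s) (hw12 ω s) 1 2 rfl rfl (fun h => hsω1 (by have h' : (s+1:K) = ω := h; linear_combination h' - hch))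
  have d_13_14 : pt13 ω s ≠ pt14 ω s := mk_ne_of_zero (w13 ω s) (w14 ω s) (hw13 ω s) (hw14 ω s) 2 h10 rfl
  have d_1_5 : pt1 ω s ≠ pt5 ω s := (mk_ne_of_zero (w5 ω s) (w1 ω s) (hw5 ω s) (hw1 ω s) 1 h10 rfl).symm
  have d_1_6 : pt1 ω s ≠ pt6 ω s := (mk_ne_of_zero (w6 ω s) (w1 ω s) (hw6 ω s) (hw1 ω s) 1 h10 rfl).symm
  have d_1_7 : pt1 ω s ≠ pt7 ω s := (mk_ne_of_zero (w7 ω s) (w1 ω s) (hw7 ω s) (hw1 ω s) 1 h10 rfl).symm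
  have d_1_8 : pt1 ω s ≠ pt8 ω s := (mk_ne_of_zero (w8 ω s) (w1 ω s) (hw8 ω s) (hw1 ω s) 1 h10 rfl).symm
  have d_2_5 : pt2 ω s ≠ pt5 ω s := (mk_ne_of_zero (w5 ω s) (w2 ω s) (hw5 ω s) (hw2 ω s) 1 h10 rfl).symm
  have d_2_6 : pt2 ω s ≠ pt6 ω s := (mk_ne_of_zero (w6 ω s) (w2 ω s) (hw6 ω s) (hw2 ω s) 1 h10 rfl).symm
  have d_2_7 : pt2 ω s ≠ pt7 ω s := (mk_ne_of_zero (w7 ω s) (w2 ω s) (hw7 ω s) (hw2 ω s) 1 h10 rfl).symm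
  have d_2_8 : pt2 ω s ≠ pt8 ω s := (mk_ne_of_zero (w8 ω s) (w2 ω s) (hw8 ω s) (hw2 ω s) 1 h10 rfl).symm
  have d_3_5 : pt3 ω s ≠ pt5 ω s := (mk_ne_of_zero (w5 ω s) (w3 ω s) (hw5 ω s) (hw3 ω s) 1 h10 rfl).symm
  have d_3_6 : pt3 ω s ≠ pt6 ω s := (mk_ne_of_zero (w6 ω s) (w3 ω s) (hw6 ω s) (hw3 ω s) 1 h10 rfl).symm
  have d_3_7 : pt3 ω s ≠ pt7 ω s := (mk_ne_of_zero (w7 ω s) (w3 ω s) (hw7 ω s) (hw3 ω s) 1 h10 rfl).symm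
  have d_3_8 : pt3 ω s ≠ pt8 ω s := (mk_ne_of_zero (w8 ω s) (w3 ω s) (hw8 ω s) (hw3 ω s) 1 h10 rfl).symm
  have d_4_5 : pt4 ω s ≠ pt5 ω s := (mk_ne_of_zero (w5 ω s) (w4 ω s) (hw5 ω s) (hw4 ω s) 1 h10 rfl).symm
  have d_4_6 : pt4 ω s ≠ pt6 ω s := (mk_ne_of_zero (w6 ω s) (w4 ω s) (hw6 ω s) (hw4 ω s) 1 h10 rfl).symm
  have d_4_7 : pt4 ω s ≠ pt7 ω s := (mk_ne_of_zero (w7 ω s) (w4 ω s) (hw7 ω s) (hw4 ω s) 1 h10 rfl).symm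
  have d_4_8 : pt4 ω s ≠ pt8 ω s := (mk_ne_of_zero (w8 ω s) (w4 ω s) (hw8 ω s) (hw4 ω s) 1 h10 rfl).symm
  have d_1_9 : pt1 ω s ≠ pt9 ω s := mk_ne_of_zero (w1 ω s) (w9 ω s) (hw1 ω s) (hw9 ω s) 0 h10 rfl
  have d_1_10 : pt1 ω s ≠ pt10 ω s := mk_ne_of_zero (w1 ω s) (w10 ω s) (hw1 ω s) (hw10 ω s) 0 h10 rfl
  have d_1_11 : pt1 ω s ≠ pt11 ω s := mk_ne_of_zero (w1 ω s) (w11 ω s) (hw1 ω s) (hw11 ω s) 0 h10 rfl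
  have d_1_12 : pt1 ω s ≠ pt12 ω s := mk_ne_of_zero (w1 ω s) (w12 ω s) (hw1 ω s) (hw12 ω s) 0 h10 rfl
  have d_2_9 : pt2 ω s ≠ pt9 ω s := mk_ne_of_zero (w2 ω s) (w9 ω s) (hw2 ω s) (hw9 ω s) 0 h10 rfl
  have d_2_10 : pt2 ω s ≠ pt10 ω s := mk_ne_of_zero (w2 ω s) (w10 ω s) (hw2 ω s) (hw10 ω s) 0 h10 rfl
  have d_2_11 : pt2 ω s ≠ pt11 ω s := mk_ne_of_zero (w2 ω s) (w11 ω s) (hw2 ω s) (hw11 ω s) 0 h10 rfl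
  have d_2_12 : pt2 ω s ≠ pt12 ω s := mk_ne_of_zero (w2 ω s) (w12 ω s) (hw2 ω s) (hw12 ω s) 0 h10 rfl
  have d_3_9 : pt3 ω s ≠ pt9 ω s := mk_ne_of_zero (w3 ω s) (w9 ω s) (hw3 ω s) (hw9 ω s) 0 h10 rfl
  have d_3_10 : pt3 ω s ≠ pt10 ω s := mk_ne_of_zero (w3 ω s) (w10 ω s) (hw3 ω s) (hw10 ω s) 0 h10 rfl
  have d_3_11 : pt3 ω s ≠ pt11 ω s := mk_ne_of_zero (w3 ω s) (w11 ω s) (hw3 ω s) (hw11 ω s) 0 h10 rfl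
  have d_3_12 : pt3 ω s ≠ pt12 ω s := mk_ne_of_zero (w3 ω s) (w12 ω s) (hw3 ω s) (hw12 ω s) 0 h10 rfl
  have d_4_9 : pt4 ω s ≠ pt9 ω s := mk_ne_of_zero (w4 ω s) (w9 ω s) (hw4 ω s) (hw9 ω s) 0 h10 rfl
  have d_4_10 : pt4 ω s ≠ pt10 ω s := mk_ne_of_zero (w4 ω s) (w10 ω s) (hw4 ω s) (hw10 ω s) 0 h10 rfl
  have d_4_11 : pt4 ω s ≠ pt11 ω s := mk_ne_of_zero (w4 ω s) (w11 ω s) (hw4 ω s) (hw11 ω s) 0 h10 rfl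
  have d_4_12 : pt4 ω s ≠ pt12 ω s := mk_ne_of_zero (w4 ω s) (w12 ω s) (hw4 ω s) (hw12 ω s) 0 h10 rfl
  have d_1_13 : pt1 ω s ≠ pt13 ω s := mk_ne_of_zero (w1 ω s) (w13 ω s) (hw1 ω s) (hw13 ω s) 0 h10 rfl
  have d_1_14 : pt1 ω s ≠ pt14 ω s := mk_ne_of_zero (w1 ω s) (w14 ω s) (hw1 ω s) (hw14 ω s) 0 h10 rfl
  have d_2_13 : pt2 ω s ≠ pt13 ω s := mk_ne_of_zero (w2 ω s) (w13 ω s) (hw2 ω s) (hw13 ω s) 0 h10 rfl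
  have d_2_14 : pt2 ω s ≠ pt14 ω s := mk_ne_of_zero (w2 ω s) (w14 ω s) (hw2 ω s) (hw14 ω s) 0 h10 rfl
  have d_3_13 : pt3 ω s ≠ pt13 ω s := mk_ne_of_zero (w3 ω s) (w13 ω s) (hw3 ω s) (hw13 ω s) 0 h10 rfl
  have d_3_14 : pt3 ω s ≠ pt14 ω s := mk_ne_of_zero (w3 ω s) (w14 ω s) (hw3 ω s) (hw14 ω s) 0 h10 rfl
  have d_4_13 : pt4 ω s ≠ pt13 ω s := mk_ne_of_zero (w4 ω s) (w13 ω s) (hw4 ω s) (hw13 ω s) 0 h10 rfl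
  have d_4_14 : pt4 ω s ≠ pt14 ω s := mk_ne_of_zero (w4 ω s) (w14 ω s) (hw4 ω s) (hw14 ω s) 0 h10 rfl
  have d_5_9 : pt5 ω s ≠ pt9 ω s := mk_ne_of_zero (w5 ω s) (w9 ω s) (hw5 ω s) (hw9 ω s) 0 h10 rfl
  have d_5_10 : pt5 ω s ≠ pt10 ω s := mk_ne_of_zero (w5 ω s) (w10 ω s) (hw5 ω s) (hw10 ω s) 0 h10 rfl
  have d_5_11 : pt5 ω s ≠ pt11 ω s := mk_ne_of_zero (w5 ω s) (w11 ω s) (hw5 ω s) (hw11 ω s) 0 h10 rfl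
  have d_5_12 : pt5 ω s ≠ pt12 ω s := mk_ne_of_zero (w5 ω s) (w12 ω s) (hw5 ω s) (hw12 ω s) 0 h10 rfl
  have d_6_9 : pt6 ω s ≠ pt9 ω s := mk_ne_of_zero (w6 ω s) (w9 ω s) (hw6 ω s) (hw9 ω s) 0 h10 rfl
  have d_6_10 : pt6 ω s ≠ pt10 ω s := mk_ne_of_zero (w6 ω s) (w10 ω s) (hw6 ω s) (hw10 ω s) 0 h10 rfl
  have d_6_11 : pt6 ω s ≠ pt11 ω s := mk_ne_of_zero (w6 ω s) (w11 ω s) (hw6 ω s) (hw11 ω s) 0 h10 rfl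
  have d_6_12 : pt6 ω s ≠ pt12 ω s := mk_ne_of_zero (w6 ω s) (w12 ω s) (hw6 ω s) (hw12 ω s) 0 h10 rfl
  have d_7_9 : pt7 ω s ≠ pt9 ω s := mk_ne_of_zero (w7 ω s) (w9 ω s) (hw7 ω s) (hw9 ω s) 0 h10 rfl
  have d_7_10 : pt7 ω s ≠ pt10 ω s := mk_ne_of_zero (w7 ω s) (w10 ω s) (hw7 ω s) (hw10 ω s) 0 h10 rfl
  have d_7_11 : pt7 ω s ≠ pt11 ω s := mk_ne_of_zero (w7 ω s) (w11 ω s) (hw7 ω s) (hw11 ω s) 0 h10 rfl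
  have d_7_12 : pt7 ω s ≠ pt12 ω s := mk_ne_of_zero (w7 ω s) (w12 ω s) (hw7 ω s) (hw12 ω s) 0 h10 rfl
  have d_8_9 : pt8 ω s ≠ pt9 ω s := mk_ne_of_zero (w8 ω s) (w9 ω s) (hw8 ω s) (hw9 ω s) 0 h10 rfl
  have d_8_10 : pt8 ω s ≠ pt10 ω s := mk_ne_of_zero (w8 ω s) (w10 ω s) (hw8 ω s) (hw10 ω s) 0 h10 rfl
  have d_8_11 : pt8 ω s ≠ pt11 ω s := mk_ne_of_zero (w8 ω s) (w11 ω s) (hw8 ω s) (hw11 ω s) 0 h10 rfl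
  have d_8_12 : pt8 ω s ≠ pt12 ω s := mk_ne_of_zero (w8 ω s) (w12 ω s) (hw8 ω s) (hw12 ω s) 0 h10 rfl
  have d_5_13 : pt5 ω s ≠ pt13 ω s := mk_ne_of_zero (w5 ω s) (w13 ω s) (hw5 ω s) (hw13 ω s) 0 h10 rfl
  have d_5_14 : pt5 ω s ≠ pt14 ω s := mk_ne_of_zero (w5 ω s) (w14 ω s) (hw5 ω s) (hw14 ω s) 0 h10 rfl
  have d_6_13 : pt6 ω s ≠ pt13 ω s := mk_ne_of_zero (w6 ω s) (w13 ω s) (hw6 ω s) (hw13 ω s) 0 h10 rfl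
  have d_6_14 : pt6 ω s ≠ pt14 ω s := mk_ne_of_zero (w6 ω s) (w14 ω s) (hw6 ω s) (hw14 ω s) 0 h10 rfl
  have d_7_13 : pt7 ω s ≠ pt13 ω s := mk_ne_of_zero (w7 ω s) (w13 ω s) (hw7 ω s) (hw13 ω s) 0 h10 rfl
  have d_7_14 : pt7 ω s ≠ pt14 ω s := mk_ne_of_zero (w7 ω s) (w14 ω s) (hw7 ω s) (hw14 ω s) 0 h10 rfl
  have d_8_13 : pt8 ω s ≠ pt13 ω s := mk_ne_of_zero (w8 ω s) (w13 ω s) (hw8 ω s) (hw13 ω s) 0 h10 rfl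
  have d_8_14 : pt8 ω s ≠ pt14 ω s := mk_ne_of_zero (w8 ω s) (w14 ω s) (hw8 ω s) (hw14 ω s) 0 h10 rfl
  have d_9_13 : pt9 ω s ≠ pt13 ω s := mk_ne_of_zero (w9 ω s) (w13 ω s) (hw9 ω s) (hw13 ω s) 1 h10 rfl
  have d_9_14 : pt9 ω s ≠ pt14 ω s := mk_ne_of_zero (w9 ω s) (w14 ω s) (hw9 ω s) (hw14 ω s) 1 h10 rfl
  have d_10_13 : pt10 ω s ≠ pt13 ω s := mk_ne_of_zero (w10 ω s) (w13 ω s) (hw10 ω s) (hw13 ω s) 1 h10 rfl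
  have d_10_14 : pt10 ω s ≠ pt14 ω s := mk_ne_of_zero (w10 ω s) (w14 ω s) (hw10 ω s) (hw14 ω s) 1 h10 rfl
  have d_11_13 : pt11 ω s ≠ pt13 ω s := mk_ne_of_zero (w11 ω s) (w13 ω s) (hw11 ω s) (hw13 ω s) 1 h10 rfl
  have d_11_14 : pt11 ω s ≠ pt14 ω s := mk_ne_of_zero (w11 ω s) (w14 ω s) (hw11 ω s) (hw14 ω s) 1 h10 rfl
  have d_12_13 : pt12 ω s ≠ pt13 ω s := mk_ne_of_zero (w12 ω s) (w13 ω s) (hw12 ω s) (hw13 ω s) 1 h10 rfl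
  have d_12_14 : pt12 ω s ≠ pt14 ω s := mk_ne_of_zero (w12 ω s) (w14 ω s) (hw12 ω s) (hw14 ω s) 1 h10 rfl
  have hS : singLocus (Fq ω) = ({pt1 ω s, pt2 ω s, pt3 ω s, pt4 ω s, pt5 ω s, pt6 ω s, pt7 ω s, pt8 ω s, pt9 ω s, pt10 ω s, pt11 ω s, pt12 ω s, pt13 ω s, pt14 ω s} : Set (Projectivization K (Fin 4 → K))) := by
    apply Set.Subset.antisymm
    · intro p hp
      obtain ⟨hF, hD⟩ := hp p.rep p.rep_nonzero p.mk_rep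
      have H0 : (p.rep 3)^2*((p.rep 0)*(p.rep 1)+(p.rep 2)^2) + ω*((ω*(p.rep 0)+(p.rep 1)+(p.rep 2))*((p.rep 0)+ω*(p.rep 1)+(p.rep 2))*((p.rep 0)+(p.rep 1)+(p.rep 2))*(ω*(p.rep 0)+ω*(p.rep 1)+(p.rep 2))) = 0 := by
        rw [← conv0 ω hω hch (p.rep 0) (p.rep 1) (p.rep 2) (p.rep 3), ← ev0 ω p.rep]
        exact hF
      have H1 : (p.rep 1)*((p.rep 0)^2+(p.rep 1)^2+ω*(p.rep 1)*(p.rep 2)+(ω+1)*(p.rep 2)^2+(p.rep 3)^2) = 0 := by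
        rw [← conv1 ω hω hch (p.rep 0) (p.rep 1) (p.rep 2) (p.rep 3), ← ev1 ω p.rep]
        exact hD 0
      have H2 : (p.rep 0)*((p.rep 0)^2+ω*(p.rep 0)*(p.rep 2)+(p.rep 1)^2+(ω+1)*(p.rep 2)^2+(p.rep 3)^2) = 0 := by
        rw [← conv2 ω hω hch (p.rep 0) (p.rep 1) (p.rep 2) (p.rep 3), ← ev2 ω p.rep]
        exact hD 1
      have H3 : ω*((p.rep 0)*(p.rep 1)*((p.rep 0)+(p.rep 1))) = 0 := by
        rw [← conv3 ω hω hch (p.rep 0) (p.rep 1) (p.rep 2) (p.rep 3), ← ev3 ω p.rep]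
        exact hD 2
      have hvne : ¬(p.rep 0 = 0 ∧ p.rep 1 = 0 ∧ p.rep 2 = 0 ∧ p.rep 3 = 0) := by
        rintro ⟨u0, u1, u2, u3⟩
        apply p.rep_nonzero
        funext j
        fin_cases j
        · exact u0
        · exact u1
        · exact u2
        · exact u3
      rcases classify ω s (p.rep 0) (p.rep 1) (p.rep 2) (p.rep 3) hω hs hch H0 H1 H2 H3 hvne with
        h|h|h|h|h|h|h|h|h|h|h|h|h|h
      · obtain ⟨t, ht, e0, e1, e2, e3⟩ := h
        have hpe : p = pt1 ω s := by
          rw [← p.mk_rep]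
          exact mk_eq_mk_of _ _ _ _ t ht e0 e1 e2 e3
        rw [hpe]
        simp
      · obtain ⟨t, ht, e0, e1, e2, e3⟩ := h
        have hpe : p = pt2 ω s := by
          rw [← p.mk_rep]
          exact mk_eq_mk_of _ _ _ _ t ht e0 e1 e2 e3
        rw [hpe]
        simp
      · obtain ⟨t, ht, e0, e1, e2, e3⟩ := h
        have hpe : p = pt3 ω s := by
          rw [← p.mk_rep]
          exact mk_eq_mk_of _ _ _ _ t ht e0 e1 e2 e3
        rw [hpe]
        simp
      · obtain ⟨t, ht, e0, e1, e2, e3⟩ := h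
        have hpe : p = pt4 ω s := by
          rw [← p.mk_rep]
          exact mk_eq_mk_of _ _ _ _ t ht e0 e1 e2 e3
        rw [hpe]
        simp
      · obtain ⟨t, ht, e0, e1, e2, e3⟩ := h
        have hpe : p = pt5 ω s := by
          rw [← p.mk_rep]
          exact mk_eq_mk_of _ _ _ _ t ht e0 e1 e2 e3
        rw [hpe]
        simp
      · obtain ⟨t, ht, e0, e1, e2, e3⟩ := h
        have hpe : p = pt6 ω s := by
          rw [← p.mk_rep]
          exact mk_eq_mk_of _ _ _ _ t ht e0 e1 e2 e3
        rw [hpe]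
        simp
      · obtain ⟨t, ht, e0, e1, e2, e3⟩ := h
        have hpe : p = pt7 ω s := by
          rw [← p.mk_rep]
          exact mk_eq_mk_of _ _ _ _ t ht e0 e1 e2 e3
        rw [hpe]
        simp
      · obtain ⟨t, ht, e0, e1, e2, e3⟩ := h
        have hpe : p = pt8 ω s := by
          rw [← p.mk_rep]
          exact mk_eq_mk_of _ _ _ _ t ht e0 e1 e2 e3
        rw [hpe]
        simp
      · obtain ⟨t, ht, e0, e1, e2, e3⟩ := h
        have hpe : p = pt9 ω s := by
          rw [← p.mk_rep]
          exact mk_eq_mk_of _ _ _ _ t ht e0 e1 e2 e3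
        rw [hpe]
        simp
      · obtain ⟨t, ht, e0, e1, e2, e3⟩ := h
        have hpe : p = pt10 ω s := by
          rw [← p.mk_rep]
          exact mk_eq_mk_of _ _ _ _ t ht e0 e1 e2 e3
        rw [hpe]
        simp
      · obtain ⟨t, ht, e0, e1, e2, e3⟩ := h
        have hpe : p = pt11 ω s := by
          rw [← p.mk_rep]
          exact mk_eq_mk_of _ _ _ _ t ht e0 e1 e2 e3
        rw [hpe]
        simp
      · obtain ⟨t, ht, e0, e1, e2, e3⟩ := h
        have hpe : p = pt12 ω s := by
          rw [← p.mk_rep]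
          exact mk_eq_mk_of _ _ _ _ t ht e0 e1 e2 e3
        rw [hpe]
        simp
      · obtain ⟨t, ht, e0, e1, e2, e3⟩ := h
        have hpe : p = pt13 ω s := by
          rw [← p.mk_rep]
          exact mk_eq_mk_of _ _ _ _ t ht e0 e1 e2 e3
        rw [hpe]
        simp
      · obtain ⟨t, ht, e0, e1, e2, e3⟩ := h
        have hpe : p = pt14 ω s := by
          rw [← p.mk_rep]
          exact mk_eq_mk_of _ _ _ _ t ht e0 e1 e2 e3
        rw [hpe]
        simp
    · intro p hp
      simp only [Set.mem_insert_iff, Set.mem_singleton_iff] at hp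
      rcases hp with h|h|h|h|h|h|h|h|h|h|h|h|h|h
      · rw [h]
        exact mem_sing ω hω hch (w1 ω s) (hw1 ω s)
          (show ((0))^2*(((1))*((0))+((1))^2) + ω*((ω*((1))+((0))+((1)))*(((1))+ω*((0))+((1)))*(((1))+((0))+((1)))*(ω*((1))+ω*((0))+((1)))) = 0 by linear_combination (4*ω + 4)*hω + (-2*ω - 2)*hch)
          (show ((0))*(((1))^2+((0))^2+ω*((0))*((1))+(ω+1)*((1))^2+((0))^2) = 0 by linear_combination (0:K)*hch)
          (show ((1))*(((1))^2+ω*((1))*((1))+((0))^2+(ω+1)*((1))^2+((0))^2) = 0 by linear_combination (ω + 1)*hch)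
          (show ω*(((1))*((0))*(((1))+((0)))) = 0 by linear_combination (0:K)*hch)
      · rw [h]
        exact mem_sing ω hω hch (w2 ω s) (hw2 ω s)
          (show ((s))^2*(((1))*((0))+((s))^2) + ω*((ω*((1))+((0))+((s)))*(((1))+ω*((0))+((s)))*(((1))+((0))+((s)))*(ω*((1))+ω*((0))+((s)))) = 0 by linear_combination (-ω^2 - ω*s - s + 2)*hω + (ω^3 + 2*ω^2*s + ω^2 + ω*s^2 + ω*s - 2*ω + s^2 - s)*hs + (2*ω*s + s - 1)*hch)
          (show ((0))*(((1))^2+((0))^2+ω*((0))*((s))+(ω+1)*((s))^2+((s))^2) = 0 by linear_combination (0:K)*hch)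
          (show ((1))*(((1))^2+ω*((1))*((s))+((0))^2+(ω+1)*((s))^2+((s))^2) = 0 by linear_combination (-1)*hω + (ω + 2)*hs + (-ω - s)*hch)
          (show ω*(((1))*((0))*(((1))+((0)))) = 0 by linear_combination (0:K)*hch)
      · rw [h]
        exact mem_sing ω hω hch (w3 ω s) (hw3 ω s)
          (show ((s+1))^2*(((1))*((0))+((s+1))^2) + ω*((ω*((1))+((0))+((s+1)))*(((1))+ω*((0))+((s+1)))*(((1))+((0))+((s+1)))*(ω*((1))+ω*((0))+((s+1)))) = 0 by linear_combination (-ω^2 + ω*s - 3*ω + s - 1)*hω + (ω^3 + 2*ω^2*s + 7*ω^2 + ω*s^2 + 5*ω*s + 6*ω + s^2 + 3*s + 2)*hs + (-2*ω*s - s)*hch)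
          (show ((0))*(((1))^2+((0))^2+ω*((0))*((s+1))+(ω+1)*((s+1))^2+((s+1))^2) = 0 by linear_combination (0:K)*hch)
          (show ((1))*(((1))^2+ω*((1))*((s+1))+((0))^2+(ω+1)*((s+1))^2+((s+1))^2) = 0 by linear_combination (-1)*hω + (ω + 2)*hs + (ω*s + s + 1)*hch)
          (show ω*(((1))*((0))*(((1))+((0)))) = 0 by linear_combination (0:K)*hch)
      · rw [h]
        exact mem_sing ω hω hch (w4 ω s) (hw4 ω s)
          (show ((0))^2*(((1))*((0))+((ω))^2) + ω*((ω*((1))+((0))+((ω)))*(((1))+ω*((0))+((ω)))*(((1))+((0))+((ω)))*(ω*((1))+ω*((0))+((ω)))) = 0 by linear_combination (4*ω^3 + 4*ω^2 - 4*ω)*hω + (2*ω)*hch)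
          (show ((0))*(((1))^2+((0))^2+ω*((0))*((ω))+(ω+1)*((ω))^2+((0))^2) = 0 by linear_combination (0:K)*hch)
          (show ((1))*(((1))^2+ω*((1))*((ω))+((0))^2+(ω+1)*((ω))^2+((0))^2) = 0 by linear_combination (ω + 1)*hω + (-ω)*hch)
          (show ω*(((1))*((0))*(((1))+((0)))) = 0 by linear_combination (0:K)*hch)
      · rw [h]
        exact mem_sing ω hω hch (w5 ω s) (hw5 ω s)
          (show ((0))^2*(((1))*((1))+((0))^2) + ω*((ω*((1))+((1))+((0)))*(((1))+ω*((1))+((0)))*(((1))+((1))+((0)))*(ω*((1))+ω*((1))+((0)))) = 0 by linear_combination (4*ω^2 + 4*ω - 4)*hω + (2)*hch)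
          (show ((1))*(((1))^2+((1))^2+ω*((1))*((0))+(ω+1)*((0))^2+((0))^2) = 0 by linear_combination hch)
          (show ((1))*(((1))^2+ω*((1))*((0))+((1))^2+(ω+1)*((0))^2+((0))^2) = 0 by linear_combination hch)
          (show ω*(((1))*((1))*(((1))+((1)))) = 0 by linear_combination (ω)*hch)
      · rw [h]
        exact mem_sing ω hω hch (w6 ω s) (hw6 ω s)
          (show ((s+1))^2*(((1))*((1))+((s))^2) + ω*((ω*((1))+((1))+((s)))*(((1))+ω*((1))+((s)))*(((1))+((1))+((s)))*(ω*((1))+ω*((1))+((s)))) = 0 by linear_combination (2*ω^2*s - ω^2 + 3*ω*s - 5*ω - 7*s + 1)*hω + (5*ω^3 + 4*ω^2*s + 9*ω^2 + ω*s^2 + 3*ω*s + s^2 + s)*hs + (ω*s + 2*ω + 4*s)*hch)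
          (show ((1))*(((1))^2+((1))^2+ω*((1))*((s))+(ω+1)*((s))^2+((s+1))^2) = 0 by linear_combination (-1)*hω + (ω + 2)*hs + (-ω + 1)*hch)
          (show ((1))*(((1))^2+ω*((1))*((s))+((1))^2+(ω+1)*((s))^2+((s+1))^2) = 0 by linear_combination (-1)*hω + (ω + 2)*hs + (-ω + 1)*hch)
          (show ω*(((1))*((1))*(((1))+((1)))) = 0 by linear_combination (ω)*hch)
      · rw [h]
        exact mem_sing ω hω hch (w7 ω s) (hw7 ω s)
          (show ((s))^2*(((1))*((1))+((s+1))^2) + ω*((ω*((1))+((1))+((s+1)))*(((1))+ω*((1))+((s+1)))*(((1))+((1))+((s+1)))*(ω*((1))+ω*((1))+((s+1)))) = 0 by linear_combination (2*ω^2*s + ω^2 + 13*ω*s + 7*s)*hω + (5*ω^3 + 4*ω^2*s + 21*ω^2 + ω*s^2 + 7*ω*s + 14*ω + s^2 + s)*hs + (-7*ω*s - ω - 4*s)*hch)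
          (show ((1))*(((1))^2+((1))^2+ω*((1))*((s+1))+(ω+1)*((s+1))^2+((s))^2) = 0 by linear_combination (-1)*hω + (ω + 2)*hs + (ω*s + 1)*hch)
          (show ((1))*(((1))^2+ω*((1))*((s+1))+((1))^2+(ω+1)*((s+1))^2+((s))^2) = 0 by linear_combination (-1)*hω + (ω + 2)*hs + (ω*s + 1)*hch)
          (show ω*(((1))*((1))*(((1))+((1)))) = 0 by linear_combination (ω)*hch)
      · rw [h]
        exact mem_sing ω hω hch (w8 ω s) (hw8 ω s)
          (show ((0))^2*(((1))*((1))+((ω+1))^2) + ω*((ω*((1))+((1))+((ω+1)))*(((1))+ω*((1))+((ω+1)))*(((1))+((1))+((ω+1)))*(ω*((1))+ω*((1))+((ω+1)))) = 0 by linear_combination (12*ω^3 + 52*ω^2 + 40*ω - 28)*hω + (14)*hch)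
          (show ((1))*(((1))^2+((1))^2+ω*((1))*((ω+1))+(ω+1)*((ω+1))^2+((0))^2) = 0 by linear_combination (ω + 3)*hω)
          (show ((1))*(((1))^2+ω*((1))*((ω+1))+((1))^2+(ω+1)*((ω+1))^2+((0))^2) = 0 by linear_combination (ω + 3)*hω)
          (show ω*(((1))*((1))*(((1))+((1)))) = 0 by linear_combination (ω)*hch)
      · rw [h]
        exact mem_sing ω hω hch (w9 ω s) (hw9 ω s)
          (show ((0))^2*(((0))*((1))+((1))^2) + ω*((ω*((0))+((1))+((1)))*(((0))+ω*((1))+((1)))*(((0))+((1))+((1)))*(ω*((0))+ω*((1))+((1)))) = 0 by linear_combination (4*ω + 4)*hω + (-2*ω - 2)*hch)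
          (show ((1))*(((0))^2+((1))^2+ω*((1))*((1))+(ω+1)*((1))^2+((0))^2) = 0 by linear_combination (ω + 1)*hch)
          (show ((0))*(((0))^2+ω*((0))*((1))+((1))^2+(ω+1)*((1))^2+((0))^2) = 0 by linear_combination (0:K)*hch)
          (show ω*(((0))*((1))*(((0))+((1)))) = 0 by linear_combination (0:K)*hch)
      · rw [h]
        exact mem_sing ω hω hch (w10 ω s) (hw10 ω s)
          (show ((s))^2*(((0))*((1))+((s))^2) + ω*((ω*((0))+((1))+((s)))*(((0))+ω*((1))+((s)))*(((0))+((1))+((s)))*(ω*((0))+ω*((1))+((s)))) = 0 by linear_combination (-ω^2 - ω*s - s + 2)*hω + (ω^3 + 2*ω^2*s + ω^2 + ω*s^2 + ω*s - 2*ω + s^2 - s)*hs + (2*ω*s + s - 1)*hch)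
          (show ((1))*(((0))^2+((1))^2+ω*((1))*((s))+(ω+1)*((s))^2+((s))^2) = 0 by linear_combination (-1)*hω + (ω + 2)*hs + (-ω - s)*hch)
          (show ((0))*(((0))^2+ω*((0))*((s))+((1))^2+(ω+1)*((s))^2+((s))^2) = 0 by linear_combination (0:K)*hch)
          (show ω*(((0))*((1))*(((0))+((1)))) = 0 by linear_combination (0:K)*hch)
      · rw [h]
        exact mem_sing ω hω hch (w11 ω s) (hw11 ω s)
          (show ((s+1))^2*(((0))*((1))+((s+1))^2) + ω*((ω*((0))+((1))+((s+1)))*(((0))+ω*((1))+((s+1)))*(((0))+((1))+((s+1)))*(ω*((0))+ω*((1))+((s+1)))) = 0 by linear_combination (-ω^2 + ω*s - 3*ω + s - 1)*hω + (ω^3 + 2*ω^2*s + 7*ω^2 + ω*s^2 + 5*ω*s + 6*ω + s^2 + 3*s + 2)*hs + (-2*ω*s - s)*hch)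
          (show ((1))*(((0))^2+((1))^2+ω*((1))*((s+1))+(ω+1)*((s+1))^2+((s+1))^2) = 0 by linear_combination (-1)*hω + (ω + 2)*hs + (ω*s + s + 1)*hch)
          (show ((0))*(((0))^2+ω*((0))*((s+1))+((1))^2+(ω+1)*((s+1))^2+((s+1))^2) = 0 by linear_combination (0:K)*hch)
          (show ω*(((0))*((1))*(((0))+((1)))) = 0 by linear_combination (0:K)*hch)
      · rw [h]
        exact mem_sing ω hω hch (w12 ω s) (hw12 ω s)
          (show ((0))^2*(((0))*((1))+((ω))^2) + ω*((ω*((0))+((1))+((ω)))*(((0))+ω*((1))+((ω)))*(((0))+((1))+((ω)))*(ω*((0))+ω*((1))+((ω)))) = 0 by linear_combination (4*ω^3 + 4*ω^2 - 4*ω)*hω + (2*ω)*hch)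
          (show ((1))*(((0))^2+((1))^2+ω*((1))*((ω))+(ω+1)*((ω))^2+((0))^2) = 0 by linear_combination (ω + 1)*hω + (-ω)*hch)
          (show ((0))*(((0))^2+ω*((0))*((ω))+((1))^2+(ω+1)*((ω))^2+((0))^2) = 0 by linear_combination (0:K)*hch)
          (show ω*(((0))*((1))*(((0))+((1)))) = 0 by linear_combination (0:K)*hch)
      · rw [h]
        exact mem_sing ω hω hch (w13 ω s) (hw13 ω s)
          (show ((ω+1))^2*(((0))*((0))+((1))^2) + ω*((ω*((0))+((0))+((1)))*(((0))+ω*((0))+((1)))*(((0))+((0))+((1)))*(ω*((0))+ω*((0))+((1)))) = 0 by linear_combination hω + (ω)*hch)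
          (show ((0))*(((0))^2+((0))^2+ω*((0))*((1))+(ω+1)*((1))^2+((ω+1))^2) = 0 by linear_combination (0:K)*hch)
          (show ((0))*(((0))^2+ω*((0))*((1))+((0))^2+(ω+1)*((1))^2+((ω+1))^2) = 0 by linear_combination (0:K)*hch)
          (show ω*(((0))*((0))*(((0))+((0)))) = 0 by linear_combination (0:K)*hch)
      · rw [h]
        exact mem_sing ω hω hch (w14 ω s) (hw14 ω s)
          (show ((1))^2*(((0))*((0))+((0))^2) + ω*((ω*((0))+((0))+((0)))*(((0))+ω*((0))+((0)))*(((0))+((0))+((0)))*(ω*((0))+ω*((0))+((0)))) = 0 by linear_combination (0:K)*hch)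
          (show ((0))*(((0))^2+((0))^2+ω*((0))*((0))+(ω+1)*((0))^2+((1))^2) = 0 by linear_combination (0:K)*hch)
          (show ((0))*(((0))^2+ω*((0))*((0))+((0))^2+(ω+1)*((0))^2+((1))^2) = 0 by linear_combination (0:K)*hch)
          (show ω*(((0))*((0))*(((0))+((0)))) = 0 by linear_combination (0:K)*hch)
  rw [hS]
  have fin13 : ({pt14 ω s} : Set (Projectivization K (Fin 4 → K))).Finite := Set.finite_singleton _
  have fin12 : ({pt13 ω s, pt14 ω s} : Set (Projectivization K (Fin 4 → K))).Finite := fin13.insert _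
  have fin11 : ({pt12 ω s, pt13 ω s, pt14 ω s} : Set (Projectivization K (Fin 4 → K))).Finite := fin12.insert _
  have fin10 : ({pt11 ω s, pt12 ω s, pt13 ω s, pt14 ω s} : Set (Projectivization K (Fin 4 → K))).Finite := fin11.insert _
  have fin9 : ({pt10 ω s, pt11 ω s, pt12 ω s, pt13 ω s, pt14 ω s} : Set (Projectivization K (Fin 4 → K))).Finite := fin10.insert _
  have fin8 : ({pt9 ω s, pt10 ω s, pt11 ω s, pt12 ω s, pt13 ω s, pt14 ω s} : Set (Projectivization K (Fin 4 → K))).Finite := fin9.insert _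
  have fin7 : ({pt8 ω s, pt9 ω s, pt10 ω s, pt11 ω s, pt12 ω s, pt13 ω s, pt14 ω s} : Set (Projectivization K (Fin 4 → K))).Finite := fin8.insert _
  have fin6 : ({pt7 ω s, pt8 ω s, pt9 ω s, pt10 ω s, pt11 ω s, pt12 ω s, pt13 ω s, pt14 ω s} : Set (Projectivization K (Fin 4 → K))).Finite := fin7.insert _
  have fin5 : ({pt6 ω s, pt7 ω s, pt8 ω s, pt9 ω s, pt10 ω s, pt11 ω s, pt12 ω s, pt13 ω s, pt14 ω s} : Set (Projectivization K (Fin 4 → K))).Finite := fin6.insert _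
  have fin4 : ({pt5 ω s, pt6 ω s, pt7 ω s, pt8 ω s, pt9 ω s, pt10 ω s, pt11 ω s, pt12 ω s, pt13 ω s, pt14 ω s} : Set (Projectivization K (Fin 4 → K))).Finite := fin5.insert _
  have fin3 : ({pt4 ω s, pt5 ω s, pt6 ω s, pt7 ω s, pt8 ω s, pt9 ω s, pt10 ω s, pt11 ω s, pt12 ω s, pt13 ω s, pt14 ω s} : Set (Projectivization K (Fin 4 → K))).Finite := fin4.insert _
  have fin2 : ({pt3 ω s, pt4 ω s, pt5 ω s, pt6 ω s, pt7 ω s, pt8 ω s, pt9 ω s, pt10 ω s, pt11 ω s, pt12 ω s, pt13 ω s, pt14 ω s} : Set (Projectivization K (Fin 4 → K))).Finite := fin3.insert _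
  have fin1 : ({pt2 ω s, pt3 ω s, pt4 ω s, pt5 ω s, pt6 ω s, pt7 ω s, pt8 ω s, pt9 ω s, pt10 ω s, pt11 ω s, pt12 ω s, pt13 ω s, pt14 ω s} : Set (Projectivization K (Fin 4 → K))).Finite := fin2.insert _
  have nm1 : pt1 ω s ∉ ({pt2 ω s, pt3 ω s, pt4 ω s, pt5 ω s, pt6 ω s, pt7 ω s, pt8 ω s, pt9 ω s, pt10 ω s, pt11 ω s, pt12 ω s, pt13 ω s, pt14 ω s} : Set (Projectivization K (Fin 4 → K))) := by
    simp only [Set.mem_insert_iff, Set.mem_singleton_iff]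
    push_neg
    exact ⟨d_1_2, d_1_3, d_1_4, d_1_5, d_1_6, d_1_7, d_1_8, d_1_9, d_1_10, d_1_11, d_1_12, d_1_13, d_1_14⟩
  have nm2 : pt2 ω s ∉ ({pt3 ω s, pt4 ω s, pt5 ω s, pt6 ω s, pt7 ω s, pt8 ω s, pt9 ω s, pt10 ω s, pt11 ω s, pt12 ω s, pt13 ω s, pt14 ω s} : Set (Projectivization K (Fin 4 → K))) := by
    simp only [Set.mem_insert_iff, Set.mem_singleton_iff]
    push_neg
    exact ⟨d_2_3, d_2_4, d_2_5, d_2_6, d_2_7, d_2_8, d_2_9, d_2_10, d_2_11, d_2_12, d_2_13, d_2_14⟩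
  have nm3 : pt3 ω s ∉ ({pt4 ω s, pt5 ω s, pt6 ω s, pt7 ω s, pt8 ω s, pt9 ω s, pt10 ω s, pt11 ω s, pt12 ω s, pt13 ω s, pt14 ω s} : Set (Projectivization K (Fin 4 → K))) := by
    simp only [Set.mem_insert_iff, Set.mem_singleton_iff]
    push_neg
    exact ⟨d_3_4, d_3_5, d_3_6, d_3_7, d_3_8, d_3_9, d_3_10, d_3_11, d_3_12, d_3_13, d_3_14⟩
  have nm4 : pt4 ω s ∉ ({pt5 ω s, pt6 ω s, pt7 ω s, pt8 ω s, pt9 ω s, pt10 ω s, pt11 ω s, pt12 ω s, pt13 ω s, pt14 ω s} : Set (Projectivization K (Fin 4 → K))) := by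
    simp only [Set.mem_insert_iff, Set.mem_singleton_iff]
    push_neg
    exact ⟨d_4_5, d_4_6, d_4_7, d_4_8, d_4_9, d_4_10, d_4_11, d_4_12, d_4_13, d_4_14⟩
  have nm5 : pt5 ω s ∉ ({pt6 ω s, pt7 ω s, pt8 ω s, pt9 ω s, pt10 ω s, pt11 ω s, pt12 ω s, pt13 ω s, pt14 ω s} : Set (Projectivization K (Fin 4 → K))) := by
    simp only [Set.mem_insert_iff, Set.mem_singleton_iff]
    push_neg
    exact ⟨d_5_6, d_5_7, d_5_8, d_5_9, d_5_10, d_5_11, d_5_12, d_5_13, d_5_14⟩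
  have nm6 : pt6 ω s ∉ ({pt7 ω s, pt8 ω s, pt9 ω s, pt10 ω s, pt11 ω s, pt12 ω s, pt13 ω s, pt14 ω s} : Set (Projectivization K (Fin 4 → K))) := by
    simp only [Set.mem_insert_iff, Set.mem_singleton_iff]
    push_neg
    exact ⟨d_6_7, d_6_8, d_6_9, d_6_10, d_6_11, d_6_12, d_6_13, d_6_14⟩
  have nm7 : pt7 ω s ∉ ({pt8 ω s, pt9 ω s, pt10 ω s, pt11 ω s, pt12 ω s, pt13 ω s, pt14 ω s} : Set (Projectivization K (Fin 4 → K))) := by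
    simp only [Set.mem_insert_iff, Set.mem_singleton_iff]
    push_neg
    exact ⟨d_7_8, d_7_9, d_7_10, d_7_11, d_7_12, d_7_13, d_7_14⟩
  have nm8 : pt8 ω s ∉ ({pt9 ω s, pt10 ω s, pt11 ω s, pt12 ω s, pt13 ω s, pt14 ω s} : Set (Projectivization K (Fin 4 → K))) := by
    simp only [Set.mem_insert_iff, Set.mem_singleton_iff]
    push_neg
    exact ⟨d_8_9, d_8_10, d_8_11, d_8_12, d_8_13, d_8_14⟩
  have nm9 : pt9 ω s ∉ ({pt10 ω s, pt11 ω s, pt12 ω s, pt13 ω s, pt14 ω s} : Set (Projectivization K (Fin 4 → K))) := by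
    simp only [Set.mem_insert_iff, Set.mem_singleton_iff]
    push_neg
    exact ⟨d_9_10, d_9_11, d_9_12, d_9_13, d_9_14⟩
  have nm10 : pt10 ω s ∉ ({pt11 ω s, pt12 ω s, pt13 ω s, pt14 ω s} : Set (Projectivization K (Fin 4 → K))) := by
    simp only [Set.mem_insert_iff, Set.mem_singleton_iff]
    push_neg
    exact ⟨d_10_11, d_10_12, d_10_13, d_10_14⟩
  have nm11 : pt11 ω s ∉ ({pt12 ω s, pt13 ω s, pt14 ω s} : Set (Projectivization K (Fin 4 → K))) := by
    simp only [Set.mem_insert_iff, Set.mem_singleton_iff]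
    push_neg
    exact ⟨d_11_12, d_11_13, d_11_14⟩
  have nm12 : pt12 ω s ∉ ({pt13 ω s, pt14 ω s} : Set (Projectivization K (Fin 4 → K))) := by
    simp only [Set.mem_insert_iff, Set.mem_singleton_iff]
    push_neg
    exact ⟨d_12_13, d_12_14⟩
  have nm13 : pt13 ω s ∉ ({pt14 ω s} : Set (Projectivization K (Fin 4 → K))) := by
    simp only [Set.mem_singleton_iff]
    exact d_13_14
  rw [Set.ncard_insert_of_notMem nm1 fin1, Set.ncard_insert_of_notMem nm2 fin2, Set.ncard_insert_of_notMem nm3 fin3, Set.ncard_insert_of_notMem nm4 fin4, Set.ncard_insert_of_notMem nm5 fin5, Set.ncard_insert_of_notMem nm6 fin6, Set.ncard_insert_of_notMem nm7 fin7, Set.ncard_insert_of_notMem nm8 fin8, Set.ncard_insert_of_notMem nm9 fin9, Set.ncard_insert_of_notMem nm10 fin10, Set.ncard_insert_of_notMem nm11 fin11, Set.ncard_insert_of_notMem nm12 fin12, Set.ncard_insert_of_notMem nm13 fin13, Set.ncard_singleton]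

end
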